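/- arXiv:2208.11159 — 8 statements merged into one kernel-verified Lean document; each statement's English description precedes it below -/
import Mathlib

section
/- Extended Howard Semicircle Theorem for the two-phase interface problem: Let h₊, h₋ > 0, ρ⁺, ρ⁻ > 0, g ∈ ℝ, σ > 0 and k ∈ ℝ satisfy −g(ρ⁺ − ρ⁻) + σk² ≥ 0. Let U⁺ ∈ C²([0, h₊]; ℝ) and U⁻ ∈ C²([−h₋, 0]; ℝ), and set a := min(U⁻([−h₋, 0]) ∪ U⁺([0, h₊])), b := max(U⁻([−h₋, 0]) ∪ U⁺([0, h₊])). Suppose c = c_R + i c_I ∈ ℂ with c_I > 0, and suppose v₂⁺ : [0, h₊] → ℂ and v₂⁻ : [−h₋, 0] → ℂ are twice continuously differentiable and satisfy: (i) the Rayleigh equations −(v₂^±)''(x) + (k² + (U^±)''(x)/(U^±(x) − c)) v₂^±(x) = 0 on their respective intervals; (ii) v₂⁺(h₊) = 0 and v₂⁻(−h₋) = 0; (iii) the normalization v₂^±(0) = U^±(0) − c; (iv) the interface condition g(ρ⁺ − ρ⁻) − σk² = ρ⁻ (U⁻)'(0) v₂⁻(0) − ρ⁺ (U⁺)'(0) v₂⁺(0)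 + ρ⁺ (v₂⁺)'(0)(U⁺(0) − c) − ρ⁻ (v₂⁻)'(0)(U⁻(0) − c). Then (c_R − (a+b)/2)² + c_I² ≤ ((b−a)/2)². -/
/-!
Howard's argument, carried out on each layer separately. Writing `v = (U - c) w`, the Rayleigh
equation becomes `((U - c)² w')' = k² (U - c)² w`; multiplying by `conj w` and integrating gives
`[(U - c)² w' conj w] = ∫ (U - c)² Q` with `Q = |w'|² + k² |w|² ≥ 0`. Since `w = 1` at the
interface and `w = 0` at the wall, the interface terms of both layers are of the form
`-∫ (U - c)² Q`, and the interface condition makes `ρ⁺ ∫₊ + ρ⁻ ∫₋` equal to the real number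
`σ k² - g (ρ⁺ - ρ⁻) ≥ 0`. With `Jₙ = ∫ Uⁿ Q`, its imaginary part gives `J₁ = c_R J₀`, its real part
`J₂ ≥ |c|² J₀`, and `∫ (U - a)(U - b) Q ≤ 0` then puts `c` in the semicircle.
-/

open Set MeasureTheory intervalIntegral

open ComplexConjugate

/-- `z = -∫ (U - c)² Q`, recorded through the moments `Jₙ = ∫ Uⁿ Q` of a weight `Q ≥ 0` with
`∫ Q > 0` on a region where `a ≤ U ≤ b`; the second conjunct is `∫ (U - a)(U - b) Q ≤ 0`.
Both properties survive positive linear combinations, which is how the two layers are glued. -/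
def HowardForm (a b : ℝ) (c z : ℂ) : Prop :=
  ∃ J₀ J₁ J₂ : ℝ, 0 < J₀ ∧ J₂ - (a + b) * J₁ + a * b * J₀ ≤ 0 ∧
    z = -(J₂ - 2 * c * J₁ + c ^ 2 * J₀)

namespace HowardForm

variable {a b : ℝ} {c z z' : ℂ}

theorem add (h : HowardForm a b c z) (h' : HowardForm a b c z') :
    HowardForm a b c (z + z') := by
  obtain ⟨J₀, J₁, J₂, hJ₀, hJ, rfl⟩ := h
  obtain ⟨K₀, K₁, K₂, hK₀, hK, rfl⟩ := h'
  refine ⟨J₀ + K₀, J₁ + K₁, J₂ + K₂, by positivity, by linarith, ?_⟩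
  push_cast
  ring

theorem ofReal_mul {r : ℝ} (hr : 0 < r) (h : HowardForm a b c z) :
    HowardForm a b c (r * z) := by
  obtain ⟨J₀, J₁, J₂, hJ₀, hJ, rfl⟩ := h
  refine ⟨r * J₀, r * J₁, r * J₂, by positivity, ?_, ?_⟩
  · nlinarith
  · push_cast
    ring

theorem semicircle {E : ℝ} (hc : 0 < c.im) (h : HowardForm a b c E) (hE : E ≤ 0) :
    (c.re - (a + b) / 2) ^ 2 + c.im ^ 2 ≤ ((b - a) / 2) ^ 2 := by
  obtain ⟨J₀, J₁, J₂, hJ₀, hJ, hz⟩ := h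
  have hre := congrArg Complex.re hz
  have him := congrArg Complex.im hz
  simp only [pow_two, Complex.ofReal_re, Complex.ofReal_im, Complex.neg_re, Complex.neg_im,
    Complex.add_re, Complex.add_im, Complex.sub_re, Complex.sub_im, Complex.mul_re,
    Complex.mul_im, Complex.re_ofNat, Complex.im_ofNat] at hre him
  have hJ₁ : J₁ = c.re * J₀ := by
    apply mul_left_cancel₀ (by positivity : 2 * c.im ≠ 0)
    linear_combination -him
  have hJ₂ : J₂ = -E + (c.re ^ 2 + c.im ^ 2) * J₀ := by
    linear_combination hre + 2 * c.re * hJ₁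
  have hcirc : (c.re ^ 2 + c.im ^ 2 - (a + b) * c.re + a * b) * J₀ ≤ 0 := by
    rw [hJ₁, hJ₂] at hJ
    linarith
  nlinarith [nonpos_of_mul_nonpos_left hcirc hJ₀]

end HowardForm

theorem intervalIntegral_norm_sq_pos_of_ne {E : Type*} [NormedAddCommGroup E]
    [NormedSpace ℝ E] [CompleteSpace E] {w w' : ℝ → E} {s t : ℝ} (hst : s ≤ t)
    (hw : ∀ x ∈ Icc s t, HasDerivAt w (w' x) x) (hw' : ContinuousOn w' (Icc s t))
    (hne : w s ≠ w t) : 0 < ∫ x in s..t, ‖w' x‖ ^ 2 := by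
  have hint : IntervalIntegrable w' volume s t := hw'.intervalIntegrable_of_Icc hst
  have hftc : ∫ x in s..t, w' x = w t - w s :=
    integral_eq_sub_of_hasDerivAt (fun x hx => hw x (uIcc_of_le hst ▸ hx)) hint
  refine lt_of_le_of_ne (integral_nonneg hst fun x _ => by positivity) fun hzero => hne ?_
  have hae : (fun x => ‖w' x‖ ^ 2) =ᵐ[volume.restrict (Ioc s t)] 0 :=
    (integral_eq_zero_iff_of_le_of_nonneg_ae hst (.of_forall fun x => sq_nonneg ‖w' x‖)
      ((hw'.norm.pow 2).intervalIntegrable_of_Icc hst)).1 hzero.symm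
  have hzero' : ∫ x in s..t, w' x = 0 := by
    rw [integral_of_le hst,
      MeasureTheory.integral_congr_ae (hae.mono fun x hx => by simpa using hx)]
    simp
  exact (sub_eq_zero.1 (hftc.symm.trans hzero')).symm

theorem howardForm_neg_integral {U Q : ℝ → ℝ} {s t a b : ℝ} (c : ℂ) (hst : s ≤ t)
    (hU : ContinuousOn U (Icc s t)) (hQ : ContinuousOn Q (Icc s t))
    (hQ_nonneg : ∀ x ∈ Icc s t, 0 ≤ Q x) (hUab : MapsTo U (Icc s t) (Icc a b))
    (hQ_pos : 0 < ∫ x in s..t, Q x) :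
    HowardForm a b c (-∫ x in s..t, ((U x : ℂ) - c) ^ 2 * Q x) := by
  have hQi := hQ.intervalIntegrable_of_Icc (μ := volume) hst
  have hUQi : IntervalIntegrable (fun x => U x * Q x) volume s t :=
    (hU.mul hQ).intervalIntegrable_of_Icc hst
  have hU2Qi : IntervalIntegrable (fun x => U x ^ 2 * Q x) volume s t :=
    ((hU.pow 2).mul hQ).intervalIntegrable_of_Icc hst
  refine ⟨∫ x in s..t, Q x, ∫ x in s..t, U x * Q x, ∫ x in s..t, U x ^ 2 * Q x, hQ_pos, ?_, ?_⟩
  · have hpointwise (x : ℝ) (hx : x ∈ Icc s t) : (U x - a) * (U x - b) * Q x ≤ 0 :=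
      mul_nonpos_of_nonpos_of_nonneg (mul_nonpos_of_nonneg_of_nonpos
        (sub_nonneg.2 (hUab hx).1) (sub_nonpos.2 (hUab hx).2)) (hQ_nonneg x hx)
    calc _ = ∫ x in s..t, (U x - a) * (U x - b) * Q x := by
          rw [← intervalIntegral.integral_const_mul, ← intervalIntegral.integral_const_mul,
            ← integral_sub hU2Qi (hUQi.const_mul _),
            ← integral_add (hU2Qi.sub (hUQi.const_mul _)) (hQi.const_mul _)]
          exact integral_congr fun x _ => by ring
      _ ≤ ∫ _ in s..t, (0 : ℝ) :=
          integral_mono_on hst (((hU.sub continuousOn_const).mul (hU.sub continuousOn_const)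
            |>.mul hQ).intervalIntegrable_of_Icc hst) intervalIntegrable_const hpointwise
      _ = 0 := integral_zero
  · have hint_ofReal {f : ℝ → ℝ} (hf : ContinuousOn f (Icc s t)) :
        IntervalIntegrable (fun x => (f x : ℂ)) volume s t :=
      (Complex.continuous_ofReal.comp_continuousOn hf).intervalIntegrable_of_Icc hst
    have h₂ := hint_ofReal (f := fun x => U x ^ 2 * Q x) ((hU.pow 2).mul hQ)
    have h₁ := (hint_ofReal (f := fun x => U x * Q x) (hU.mul hQ)).const_mul (2 * c)
    have h₀ := (hint_ofReal hQ).const_mul (c ^ 2)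
    rw [integral_congr (g := fun x => ((U x ^ 2 * Q x : ℝ) : ℂ) - 2 * c * (U x * Q x : ℝ)
        + c ^ 2 * (Q x : ℝ)) fun x _ => by push_cast; ring,
      integral_add (h₂.sub h₁) h₀, integral_sub h₂ h₁, intervalIntegral.integral_const_mul,
      intervalIntegral.integral_const_mul, intervalIntegral.integral_ofReal,
      intervalIntegral.integral_ofReal, intervalIntegral.integral_ofReal]

theorem HasDerivAt.mul_conj_of_sturmLiouville {F w : ℝ → ℂ} {P : ℂ} {k x : ℝ} (hP : P ≠ 0)
    (hF : HasDerivAt F (k ^ 2 * P * w x) x) (hw : HasDerivAt w (F x / P) x) :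
    HasDerivAt (fun y => F y * conj (w y))
      (P * ((‖F x / P‖ ^ 2 + k ^ 2 * ‖w x‖ ^ 2 : ℝ) : ℂ)) x := by
  have hconj : HasDerivAt (fun y => conj (w y)) (conj (F x / P)) x :=
    Complex.conjCLE.hasFDerivAt.comp_hasDerivAt x hw
  refine (hF.mul hconj).congr_deriv ?_
  have hFP : P * (F x / P) = F x := mul_div_cancel₀ _ hP
  push_cast
  rw [← Complex.mul_conj', ← Complex.mul_conj']
  linear_combination (-conj (F x / P)) * hFP

theorem Complex.ofReal_sub_ne_zero_of_im_pos {c : ℂ} (x : ℝ) (hc : 0 < c.im) :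
    (x : ℂ) - c ≠ 0 := fun h => by
  have := congrArg Complex.im h
  simp only [Complex.sub_im, Complex.ofReal_im, Complex.zero_im] at this
  linarith

def shearWronskian (U U' : ℝ → ℝ) (c : ℂ) (v v' : ℝ → ℂ) (x : ℝ) : ℂ :=
  ((U x : ℂ) - c) * v' x - U' x * v x

theorem continuousOn_shearWronskian {U U' : ℝ → ℝ} {v v' : ℝ → ℂ} {c : ℂ} {S : Set ℝ}
    (hU : ContinuousOn U S) (hU' : ContinuousOn U' S) (hv : ContinuousOn v S)
    (hv' : ContinuousOn v' S) : ContinuousOn (shearWronskian U U' c v v') S :=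
  (((Complex.continuous_ofReal.comp_continuousOn hU).sub continuousOn_const).mul hv').sub
    ((Complex.continuous_ofReal.comp_continuousOn hU').mul hv)

theorem hasDerivAt_shearWronskian {U U' U'' : ℝ → ℝ} {v v' v'' : ℝ → ℂ} {c : ℂ} {k x : ℝ}
    (hU : HasDerivAt U (U' x) x) (hU' : HasDerivAt U' (U'' x) x)
    (hv : HasDerivAt v (v' x) x) (hv' : HasDerivAt v' (v'' x) x)
    (hR : -v'' x + ((k : ℂ) ^ 2 + (U'' x : ℂ) / ((U x : ℂ) - c)) * v x = 0)
    (hd : (U x : ℂ) - c ≠ 0) :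
    HasDerivAt (shearWronskian U U' c v v') (k ^ 2 * ((U x : ℂ) - c) * v x) x := by
  refine (((hU.ofReal_comp.sub_const c).mul hv').sub (hU'.ofReal_comp.mul hv)).congr_deriv ?_
  have hU'' : ((U x : ℂ) - c) * ((U'' x : ℂ) / ((U x : ℂ) - c)) = U'' x :=
    mul_div_cancel₀ _ hd
  linear_combination -(U x - c) * hR + v x * hU''

theorem howardForm_shearWronskian {U U' U'' : ℝ → ℝ} {v v' v'' : ℝ → ℂ} {c : ℂ}
    {k s t a b : ℝ} (hst : s ≤ t)
    (hU : ∀ x ∈ Icc s t, HasDerivAt U (U' x) x) (hU' : ∀ x ∈ Icc s t, HasDerivAt U' (U'' x) x)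
    (hv : ∀ x ∈ Icc s t, HasDerivAt v (v' x) x) (hv' : ∀ x ∈ Icc s t, HasDerivAt v' (v'' x) x)
    (hR : ∀ x ∈ Icc s t, -v'' x + ((k : ℂ) ^ 2 + (U'' x : ℂ) / ((U x : ℂ) - c)) * v x = 0)
    (hc : 0 < c.im) (hUab : MapsTo U (Icc s t) (Icc a b))
    (hne : v s / ((U s : ℂ) - c) ≠ v t / ((U t : ℂ) - c)) :
    HowardForm a b c (shearWronskian U U' c v v' s * conj (v s / ((U s : ℂ) - c))
      - shearWronskian U U' c v v' t * conj (v t / ((U t : ℂ) - c))) := by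
  set W := shearWronskian U U' c v v'
  set d : ℝ → ℂ := fun x => (U x : ℂ) - c
  set w : ℝ → ℂ := fun x => v x / d x
  set w' : ℝ → ℂ := fun x => W x / d x ^ 2
  set Q : ℝ → ℝ := fun x => ‖w' x‖ ^ 2 + k ^ 2 * ‖w x‖ ^ 2
  have hd (x : ℝ) : d x ≠ 0 := Complex.ofReal_sub_ne_zero_of_im_pos (U x) hc
  have hw (x : ℝ) (hx : x ∈ Icc s t) : HasDerivAt w (w' x) x :=
    ((hv x hx).div ((hU x hx).ofReal_comp.sub_const c) (hd x)).congr_deriv (by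
      simp only [w', W, shearWronskian, d]; ring)
  have hG (x : ℝ) (hx : x ∈ Icc s t) :
      HasDerivAt (fun y => W y * conj (w y)) (d x ^ 2 * (Q x : ℂ)) x := by
    refine .mul_conj_of_sturmLiouville (pow_ne_zero 2 (hd x)) ?_ (hw x hx)
    refine (hasDerivAt_shearWronskian (hU x hx) (hU' x hx) (hv x hx) (hv' x hx) (hR x hx)
      (hd x)).congr_deriv ?_
    simp only [w, div_eq_mul_inv, d]
    field_simp
  have hUc : ContinuousOn U (Icc s t) := HasDerivAt.continuousOn hU
  have hdc : ContinuousOn d (Icc s t) :=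
    (Complex.continuous_ofReal.comp_continuousOn hUc).sub continuousOn_const
  have hWc : ContinuousOn W (Icc s t) := continuousOn_shearWronskian hUc
    (HasDerivAt.continuousOn hU') (HasDerivAt.continuousOn hv) (HasDerivAt.continuousOn hv')
  have hw'c : ContinuousOn w' (Icc s t) := hWc.div (hdc.pow 2) fun x _ => pow_ne_zero 2 (hd x)
  have hwc : ContinuousOn w (Icc s t) := HasDerivAt.continuousOn hw
  have hQc : ContinuousOn Q (Icc s t) :=
    (hw'c.norm.pow 2).add (continuousOn_const.mul (hwc.norm.pow 2))
  have hQ_pos : 0 < ∫ x in s..t, Q x := by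
    refine (intervalIntegral_norm_sq_pos_of_ne hst hw hw'c hne).trans_le ?_
    refine integral_mono_on hst ((hw'c.norm.pow 2).intervalIntegrable_of_Icc hst)
      (hQc.intervalIntegrable_of_Icc hst) fun x _ => ?_
    simp only [Q]
    nlinarith [sq_nonneg (k * ‖w x‖)]
  have hftc : ∫ x in s..t, d x ^ 2 * (Q x : ℂ) = W t * conj (w t) - W s * conj (w s) := by
    refine integral_eq_sub_of_hasDerivAt (fun x hx => hG x (uIcc_of_le hst ▸ hx)) ?_
    exact (hdc.pow 2).mul (Complex.continuous_ofReal.comp_continuousOn hQc)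
      |>.intervalIntegrable_of_Icc hst
  have hhoward := howardForm_neg_integral c hst hUc hQc (fun x _ => by positivity) hUab hQ_pos
  rwa [hftc, neg_sub] at hhoward

theorem semicircle_two_phase_general
    (hp hm : ℝ) (hhp : 0 < hp) (hhm : 0 < hm)
    (ρp ρm : ℝ) (hρp : 0 < ρp) (hρm : 0 < ρm)
    (g σ k : ℝ)
    (hst : 0 ≤ -g * (ρp - ρm) + σ * k ^ 2)
    (Up Up' Up'' : ℝ → ℝ)
    (hUp : ∀ x ∈ Icc (0:ℝ) hp, HasDerivAt Up (Up' x) x)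
    (hUp' : ∀ x ∈ Icc (0:ℝ) hp, HasDerivAt Up' (Up'' x) x)
    (Um Um' Um'' : ℝ → ℝ)
    (hUm : ∀ x ∈ Icc (-hm) (0:ℝ), HasDerivAt Um (Um' x) x)
    (hUm' : ∀ x ∈ Icc (-hm) (0:ℝ), HasDerivAt Um' (Um'' x) x)
    (a b : ℝ)
    (ha : a = sInf (Um '' Icc (-hm) 0 ∪ Up '' Icc 0 hp))
    (hb : b = sSup (Um '' Icc (-hm) 0 ∪ Up '' Icc 0 hp))
    (c : ℂ) (hcI : 0 < c.im)
    (vp vp' vp'' : ℝ → ℂ)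
    (hvp : ∀ x ∈ Icc (0:ℝ) hp, HasDerivAt vp (vp' x) x)
    (hvp' : ∀ x ∈ Icc (0:ℝ) hp, HasDerivAt vp' (vp'' x) x)
    (vm vm' vm'' : ℝ → ℂ)
    (hvm : ∀ x ∈ Icc (-hm) (0:ℝ), HasDerivAt vm (vm' x) x)
    (hvm' : ∀ x ∈ Icc (-hm) (0:ℝ), HasDerivAt vm' (vm'' x) x)
    (hRp : ∀ x ∈ Icc (0:ℝ) hp,
      -vp'' x + ((k : ℂ) ^ 2 + (Up'' x : ℂ) / ((Up x : ℂ) - c)) * vp x = 0)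
    (hRm : ∀ x ∈ Icc (-hm) (0:ℝ),
      -vm'' x + ((k : ℂ) ^ 2 + (Um'' x : ℂ) / ((Um x : ℂ) - c)) * vm x = 0)
    (hbp : vp hp = 0) (hbm : vm (-hm) = 0)
    (hnp : vp 0 = (Up 0 : ℂ) - c) (hnm : vm 0 = (Um 0 : ℂ) - c)
    (hint : ((g * (ρp - ρm) - σ * k ^ 2 : ℝ) : ℂ)
      = (ρm : ℂ) * (Um' 0 : ℂ) * vm 0 - (ρp : ℂ) * (Up' 0 : ℂ) * vp 0
        + (ρp : ℂ) * vp' 0 * ((Up 0 : ℂ) - c)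
        - (ρm : ℂ) * vm' 0 * ((Um 0 : ℂ) - c)) :
    (c.re - (a + b) / 2) ^ 2 + c.im ^ 2 ≤ ((b - a) / 2) ^ 2 := by
  have hS : Um '' Icc (-hm) 0 ∪ Up '' Icc 0 hp ⊆ Icc a b := by
    have hSc : IsCompact (Um '' Icc (-hm) 0 ∪ Up '' Icc 0 hp) :=
      (isCompact_Icc.image_of_continuousOn (HasDerivAt.continuousOn hUm)).union
        (isCompact_Icc.image_of_continuousOn (HasDerivAt.continuousOn hUp))
    exact fun y hy => ⟨ha ▸ csInf_le hSc.bddBelow hy, hb ▸ le_csSup hSc.bddAbove hy⟩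
  have hwp : vp 0 / ((Up 0 : ℂ) - c) = 1 := by
    rw [hnp, div_self (Complex.ofReal_sub_ne_zero_of_im_pos _ hcI)]
  have hwm : vm 0 / ((Um 0 : ℂ) - c) = 1 := by
    rw [hnm, div_self (Complex.ofReal_sub_ne_zero_of_im_pos _ hcI)]
  have hplus := howardForm_shearWronskian hhp.le hUp hUp' hvp hvp' hRp hcI
    ((mapsTo_image _ _).mono_right (subset_union_right.trans hS)) (by simp [hwp, hbp])
  have hminus := howardForm_shearWronskian (neg_nonpos.2 hhm.le) hUm hUm' hvm hvm' hRm hcI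
    ((mapsTo_image _ _).mono_right (subset_union_left.trans hS)) (by simp [hwm, hbm])
  simp only [hwp, hwm, hbp, hbm, zero_div, map_one, map_zero, mul_one, mul_zero, sub_zero,
    zero_sub] at hplus hminus
  refine HowardForm.semicircle (E := g * (ρp - ρm) - σ * k ^ 2) hcI ?_ (by linarith)
  convert (hplus.ofReal_mul hρp).add (hminus.ofReal_mul hρm) using 1
  rw [hint]
  simp only [shearWronskian]
  ring

/-- Extended Howard Semicircle Theorem for the linearized two-phase interface problem:
any unstable wave speed `c` (with `c.im > 0`) of the eigenvalue problem lies in the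
upper semicircle determined by the range of the shear profiles. -/
theorem semicircle_two_phase
    (hp hm : ℝ) (hhp : 0 < hp) (hhm : 0 < hm)
    (ρp ρm : ℝ) (hρp : 0 < ρp) (hρm : 0 < ρm)
    (g σ k : ℝ) (hσ : 0 < σ)
    (hst : 0 ≤ -g * (ρp - ρm) + σ * k ^ 2)
    (Up Up' Up'' : ℝ → ℝ)
    (hUp : ∀ x ∈ Icc (0:ℝ) hp, HasDerivAt Up (Up' x) x)
    (hUp' : ∀ x ∈ Icc (0:ℝ) hp, HasDerivAt Up' (Up'' x) x)
    (hUpc : ContinuousOn Up'' (Icc (0:ℝ) hp))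
    (Um Um' Um'' : ℝ → ℝ)
    (hUm : ∀ x ∈ Icc (-hm) (0:ℝ), HasDerivAt Um (Um' x) x)
    (hUm' : ∀ x ∈ Icc (-hm) (0:ℝ), HasDerivAt Um' (Um'' x) x)
    (hUmc : ContinuousOn Um'' (Icc (-hm) (0:ℝ)))
    (a b : ℝ)
    (ha : a = sInf (Um '' Icc (-hm) 0 ∪ Up '' Icc 0 hp))
    (hb : b = sSup (Um '' Icc (-hm) 0 ∪ Up '' Icc 0 hp))
    (c : ℂ) (hcI : 0 < c.im)
    (vp vp' vp'' : ℝ → ℂ)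
    (hvp : ∀ x ∈ Icc (0:ℝ) hp, HasDerivAt vp (vp' x) x)
    (hvp' : ∀ x ∈ Icc (0:ℝ) hp, HasDerivAt vp' (vp'' x) x)
    (hvpc : ContinuousOn vp'' (Icc (0:ℝ) hp))
    (vm vm' vm'' : ℝ → ℂ)
    (hvm : ∀ x ∈ Icc (-hm) (0:ℝ), HasDerivAt vm (vm' x) x)
    (hvm' : ∀ x ∈ Icc (-hm) (0:ℝ), HasDerivAt vm' (vm'' x) x)
    (hvmc : ContinuousOn vm'' (Icc (-hm) (0:ℝ)))
    (hRp : ∀ x ∈ Icc (0:ℝ) hp,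
      -vp'' x + ((k : ℂ) ^ 2 + (Up'' x : ℂ) / ((Up x : ℂ) - c)) * vp x = 0)
    (hRm : ∀ x ∈ Icc (-hm) (0:ℝ),
      -vm'' x + ((k : ℂ) ^ 2 + (Um'' x : ℂ) / ((Um x : ℂ) - c)) * vm x = 0)
    (hbp : vp hp = 0) (hbm : vm (-hm) = 0)
    (hnp : vp 0 = (Up 0 : ℂ) - c) (hnm : vm 0 = (Um 0 : ℂ) - c)
    (hint : ((g * (ρp - ρm) - σ * k ^ 2 : ℝ) : ℂ)
      = (ρm : ℂ) * (Um' 0 : ℂ) * vm 0 - (ρp : ℂ) * (Up' 0 : ℂ) * vp 0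
        + (ρp : ℂ) * vp' 0 * ((Up 0 : ℂ) - c)
        - (ρm : ℂ) * vm' 0 * ((Um 0 : ℂ) - c)) :
    (c.re - (a + b) / 2) ^ 2 + c.im ^ 2 ≤ ((b - a) / 2) ^ 2 :=
  semicircle_two_phase_general hp hm hhp hhm ρp ρm hρp hρm g σ k hst Up Up' Up'' hUp hUp' Um Um'
    Um'' hUm hUm' a b ha hb c hcI vp vp' vp'' hvp hvp' vm vm' vm'' hvm hvm' hRp hRm hbp hbm hnp hnm
    hint
end

section
/- Let h > 0, U ∈ C¹([−h, 0]; ℝ), k ∈ ℝ, and c ∈ ℂ with Im c ≠ 0. Suppose ψ : [−h, 0] → ℂ is twice continuously differentiable, satisfies ((U(x) − c)² ψ'(x))' − k² (U(x) − c)² ψ(x) = 0 on [−h, 0], and ψ(−h) = 0. Then (U(0) − c)² ψ'(0) · conj(ψ(0)) = ∫_{−h}^{0} (U(x) − c)² ( k² |ψ(x)|² + |ψ'(x)|² ) dx. -/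
/-!
Multiplying `(p ψ')' = r ψ` by `conj ψ` exhibits the integrand `r |ψ|² + p |ψ'|²` as the
derivative of `p ψ' conj ψ`, so the identity is the fundamental theorem of calculus; the
boundary term at `-h` vanishes because `ψ (-h) = 0`.
-/

open Set MeasureTheory intervalIntegral ComplexConjugate

theorem hasDerivAt_mul_deriv_mul_conj {p r ψ ψ' : ℝ → ℂ} {x : ℝ}
    (hψ : HasDerivAt ψ (ψ' x) x) (hode : HasDerivAt (fun t => p t * ψ' t) (r x * ψ x) x) :
    HasDerivAt (fun t => p t * ψ' t * conj (ψ t))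
      (r x * ‖ψ x‖ ^ 2 + p x * ‖ψ' x‖ ^ 2) x := by
  refine (hode.mul hψ.star).congr_deriv ?_
  simp only [← Complex.mul_conj', starRingEnd_apply]
  ring

theorem integral_mul_normSq_add_mul_normSq_deriv {a b : ℝ} {p r ψ ψ' : ℝ → ℂ}
    (hp : ContinuousOn p (uIcc a b)) (hr : ContinuousOn r (uIcc a b))
    (hψ : ∀ x ∈ uIcc a b, HasDerivAt ψ (ψ' x) x) (hψ' : ContinuousOn ψ' (uIcc a b))
    (hode : ∀ x ∈ uIcc a b, HasDerivAt (fun t => p t * ψ' t) (r x * ψ x) x) :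
    ∫ x in a..b, (r x * ‖ψ x‖ ^ 2 + p x * ‖ψ' x‖ ^ 2)
      = p b * ψ' b * conj (ψ b) - p a * ψ' a * conj (ψ a) := by
  have hψc : ContinuousOn ψ (uIcc a b) := fun x hx => (hψ x hx).continuousAt.continuousWithinAt
  have hnorm : ∀ {f : ℝ → ℂ}, ContinuousOn f (uIcc a b) →
      ContinuousOn (fun x => (‖f x‖ : ℂ) ^ 2) (uIcc a b) := fun hf =>
    (Complex.continuous_ofReal.comp_continuousOn hf.norm).pow 2
  refine integral_eq_sub_of_hasDerivAt
    (fun x hx => hasDerivAt_mul_deriv_mul_conj (hψ x hx) (hode x hx)) ?_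
  exact ((hr.mul (hnorm hψc)).add (hp.mul (hnorm hψ'))).intervalIntegrable (μ := volume)

theorem rayleigh_integral_identity_general
    (h : ℝ) (hh : 0 < h)
    (U U' : ℝ → ℝ)
    (hU : ∀ x ∈ Icc (-h) (0:ℝ), HasDerivAt U (U' x) x)
    (k : ℝ) (c : ℂ)
    (ψ ψ' ψ'' : ℝ → ℂ)
    (hψ : ∀ x ∈ Icc (-h) (0:ℝ), HasDerivAt ψ (ψ' x) x)
    (hψ' : ∀ x ∈ Icc (-h) (0:ℝ), HasDerivAt ψ' (ψ'' x) x)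
    (hode : ∀ x ∈ Icc (-h) (0:ℝ),
      HasDerivAt (fun t => ((U t : ℂ) - c) ^ 2 * ψ' t)
        ((k : ℂ) ^ 2 * ((U x : ℂ) - c) ^ 2 * ψ x) x)
    (hbd : ψ (-h) = 0) :
    ((U 0 : ℂ) - c) ^ 2 * ψ' 0 * (starRingEnd ℂ) (ψ 0)
      = ∫ x in (-h)..0, ((U x : ℂ) - c) ^ 2
          * ((k ^ 2 * ‖ψ x‖ ^ 2 + ‖ψ' x‖ ^ 2 : ℝ) : ℂ) := by
  rw [← uIcc_of_le (by linarith : -h ≤ 0)] at hU hψ hψ' hode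
  have hUc : ContinuousOn (fun x => ((U x : ℂ) - c) ^ 2) (uIcc (-h) 0) :=
    ((Complex.continuous_ofReal.comp_continuousOn
      fun x hx => (hU x hx).continuousAt.continuousWithinAt).sub continuousOn_const).pow 2
  have henergy := integral_mul_normSq_add_mul_normSq_deriv
    (r := fun x => (k : ℂ) ^ 2 * ((U x : ℂ) - c) ^ 2) hUc (continuousOn_const.mul hUc) hψ
    (fun x hx => (hψ' x hx).continuousAt.continuousWithinAt) hode
  rw [hbd, map_zero, mul_zero, sub_zero] at henergy
  rw [← henergy]
  congr 1 with x
  push_cast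
  ring

/-- Basic integral identity for the self-adjoint form of the Rayleigh equation,
used in the proof of the Semicircle Theorem. -/
theorem rayleigh_integral_identity
    (h : ℝ) (hh : 0 < h)
    (U U' : ℝ → ℝ)
    (hU : ∀ x ∈ Icc (-h) (0:ℝ), HasDerivAt U (U' x) x)
    (hU' : ContinuousOn U' (Icc (-h) (0:ℝ)))
    (k : ℝ) (c : ℂ) (hc : c.im ≠ 0)
    (ψ ψ' ψ'' : ℝ → ℂ)
    (hψ : ∀ x ∈ Icc (-h) (0:ℝ), HasDerivAt ψ (ψ' x) x)
    (hψ' : ∀ x ∈ Icc (-h) (0:ℝ), HasDerivAt ψ' (ψ'' x) x)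
    (hψ'' : ContinuousOn ψ'' (Icc (-h) (0:ℝ)))
    (hode : ∀ x ∈ Icc (-h) (0:ℝ),
      HasDerivAt (fun t => ((U t : ℂ) - c) ^ 2 * ψ' t)
        ((k : ℂ) ^ 2 * ((U x : ℂ) - c) ^ 2 * ψ x) x)
    (hbd : ψ (-h) = 0) :
    ((U 0 : ℂ) - c) ^ 2 * ψ' 0 * (starRingEnd ℂ) (ψ 0)
      = ∫ x in (-h)..0, ((U x : ℂ) - c) ^ 2
          * ((k ^ 2 * ‖ψ x‖ ^ 2 + ‖ψ' x‖ ^ 2 : ℝ) : ℂ) :=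
  rayleigh_integral_identity_general h hh U U' hU k c ψ ψ' ψ'' hψ hψ' hode hbd
end

section
/- Let h₊, h₋ > 0, ρ⁺, ρ⁻ > 0, g ∈ ℝ, σ > 0, k ∈ ℝ, U⁺ ∈ C¹([0, h₊]; ℝ), U⁻ ∈ C¹([−h₋, 0]; ℝ), and c = c_R + i c_I ∈ ℂ with c_I ≠ 0. Suppose ψ⁺ : [0, h₊] → ℂ and ψ⁻ : [−h₋, 0] → ℂ are twice continuously differentiable and satisfy ((U^±(x) − c)² (ψ^±)'(x))' − k² (U^±(x) − c)² ψ^±(x) = 0 on their respective intervals, ψ⁺(h₊) = 0, ψ⁻(−h₋) = 0, ψ^±(0) = −1, and the free boundary condition −g(ρ⁺ − ρ⁻) + σk² = ρ⁺ (U⁺(0) − c)² (ψ⁺)'(0) − ρ⁻ (U⁻(0) − c)² (ψ⁻)'(0). Define Q^± := k² |ψ^±|² + |(ψ^±)'|². Then ∫₀^{h₊} ρ⁺ U⁺ Q⁺ dx + ∫_{−h₋}^{0} ρ⁻ U⁻ Q⁻ dx = c_R ( ∫₀^{h₊} ρ⁺ Q⁺ dx + ∫_{−h₋}^{0} ρ⁻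 Q⁻ dx ). -/
/-!
Multiplying the Rayleigh equation `(w ψ')' = k² w ψ`, `w = (U - c)²`, by `conj ψ` and integrating
by parts gives `∫ w Q = [w ψ' conj ψ]` on each layer. Since `Im (U - c)² = -2 c_I (U - c_R)`, the
imaginary part reads `-2 c_I ∫ (U - c_R) Q = Im [w ψ' conj ψ]`. With `ψ^± = 0` at the outer walls and
`ψ^±(0) = -1`, the `ρ`-weighted sum of these boundary terms is the imaginary part of the real
free-boundary constant, hence zero, and `c_I ≠ 0` can be cancelled.
-/

open Set MeasureTheory intervalIntegral ComplexConjugate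

theorem hasDerivAt_flux_mul_conj {w ψ ψ' : ℝ → ℂ} {k x : ℝ}
    (hψ : HasDerivAt ψ (ψ' x) x)
    (hflux : HasDerivAt (fun t => w t * ψ' t) (k ^ 2 * w x * ψ x) x) :
    HasDerivAt (fun t => w t * ψ' t * conj (ψ t))
      (w x * ((k ^ 2 * ‖ψ x‖ ^ 2 + ‖ψ' x‖ ^ 2 : ℝ) : ℂ)) x := by
  refine (hflux.mul hψ.star).congr_deriv ?_
  push_cast
  rw [← Complex.mul_conj', ← Complex.mul_conj']
  simp only [Complex.star_def]
  ring

theorem continuousOn_energy {ψ ψ' : ℝ → ℂ} {s : Set ℝ} (k : ℝ) (hψ : ContinuousOn ψ s)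
    (hψ' : ContinuousOn ψ' s) :
    ContinuousOn (fun x => k ^ 2 * ‖ψ x‖ ^ 2 + ‖ψ' x‖ ^ 2) s := by
  fun_prop

theorem integral_weight_mul_energy {w ψ ψ' : ℝ → ℂ} {k a b : ℝ} (hab : a ≤ b)
    (hw : ContinuousOn w (Icc a b)) (hψ : ∀ x ∈ Icc a b, HasDerivAt ψ (ψ' x) x)
    (hψ' : ContinuousOn ψ' (Icc a b))
    (hflux : ∀ x ∈ Icc a b, HasDerivAt (fun t => w t * ψ' t) (k ^ 2 * w x * ψ x) x) :
    ∫ x in a..b, w x * ((k ^ 2 * ‖ψ x‖ ^ 2 + ‖ψ' x‖ ^ 2 : ℝ) : ℂ)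
      = w b * ψ' b * conj (ψ b) - w a * ψ' a * conj (ψ a) := by
  have hQ := continuousOn_energy k (HasDerivAt.continuousOn hψ) hψ'
  refine integral_eq_sub_of_hasDerivAt (f := fun t => w t * ψ' t * conj (ψ t)) (fun x hx => ?_)
    (ContinuousOn.intervalIntegrable_of_Icc hab (by fun_prop))
  rw [uIcc_of_le hab] at hx
  exact hasDerivAt_flux_mul_conj (hψ x hx) (hflux x hx)

theorem Complex.im_ofReal_sub_sq (u : ℝ) (c : ℂ) :
    (((u : ℂ) - c) ^ 2).im = -2 * c.im * (u - c.re) := by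
  simp only [sq, Complex.mul_im, Complex.sub_re, Complex.sub_im, Complex.ofReal_re,
    Complex.ofReal_im]
  ring

theorem rayleigh_first_moment {U : ℝ → ℝ} {ψ ψ' : ℝ → ℂ} {k a b : ℝ} {c : ℂ} (hab : a ≤ b)
    (hU : ContinuousOn U (Icc a b)) (hψ : ∀ x ∈ Icc a b, HasDerivAt ψ (ψ' x) x)
    (hψ' : ContinuousOn ψ' (Icc a b))
    (hode : ∀ x ∈ Icc a b, HasDerivAt (fun t => ((U t : ℂ) - c) ^ 2 * ψ' t)
      (k ^ 2 * ((U x : ℂ) - c) ^ 2 * ψ x) x) :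
    -2 * c.im * ((∫ x in a..b, U x * (k ^ 2 * ‖ψ x‖ ^ 2 + ‖ψ' x‖ ^ 2))
        - c.re * ∫ x in a..b, k ^ 2 * ‖ψ x‖ ^ 2 + ‖ψ' x‖ ^ 2)
      = (((U b : ℂ) - c) ^ 2 * ψ' b * conj (ψ b)
          - ((U a : ℂ) - c) ^ 2 * ψ' a * conj (ψ a)).im := by
  have hQ := continuousOn_energy k (HasDerivAt.continuousOn hψ) hψ'
  have hw : ContinuousOn (fun x => ((U x : ℂ) - c) ^ 2) (Icc a b) := by fun_prop
  have hwQ : IntervalIntegrable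
      (fun x => ((U x : ℂ) - c) ^ 2 * ((k ^ 2 * ‖ψ x‖ ^ 2 + ‖ψ' x‖ ^ 2 : ℝ) : ℂ)) volume a b :=
    ContinuousOn.intervalIntegrable_of_Icc hab (by fun_prop)
  calc -2 * c.im * ((∫ x in a..b, U x * (k ^ 2 * ‖ψ x‖ ^ 2 + ‖ψ' x‖ ^ 2))
        - c.re * ∫ x in a..b, k ^ 2 * ‖ψ x‖ ^ 2 + ‖ψ' x‖ ^ 2)
      = ∫ x in a..b, (((U x : ℂ) - c) ^ 2 * ((k ^ 2 * ‖ψ x‖ ^ 2 + ‖ψ' x‖ ^ 2 : ℝ) : ℂ)).im := by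
        rw [← intervalIntegral.integral_const_mul,
          ← integral_sub (f := fun x => U x * (k ^ 2 * ‖ψ x‖ ^ 2 + ‖ψ' x‖ ^ 2))
            ((hU.mul hQ).intervalIntegrable_of_Icc hab)
            ((hQ.intervalIntegrable_of_Icc hab).const_mul _),
          ← intervalIntegral.integral_const_mul]
        congr with x
        rw [Complex.im_mul_ofReal, Complex.im_ofReal_sub_sq]
        ring
    _ = (∫ x in a..b, ((U x : ℂ) - c) ^ 2 * ((k ^ 2 * ‖ψ x‖ ^ 2 + ‖ψ' x‖ ^ 2 : ℝ) : ℂ)).im :=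
        intervalIntegral_im hwQ
    _ = _ := by rw [integral_weight_mul_energy hab hw hψ hψ' hode]

theorem first_moment_identity_general
    (hp hm : ℝ) (hhp : 0 < hp) (hhm : 0 < hm)
    (ρp ρm : ℝ)
    (g σ k : ℝ)
    (Up Up' : ℝ → ℝ)
    (hUp : ∀ x ∈ Icc (0:ℝ) hp, HasDerivAt Up (Up' x) x)
    (Um Um' : ℝ → ℝ)
    (hUm : ∀ x ∈ Icc (-hm) (0:ℝ), HasDerivAt Um (Um' x) x)
    (c : ℂ) (hcI : c.im ≠ 0)
    (ψp ψp' ψp'' ψm ψm' ψm'' : ℝ → ℂ)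
    (hψp : ∀ x ∈ Icc (0:ℝ) hp, HasDerivAt ψp (ψp' x) x)
    (hψp' : ∀ x ∈ Icc (0:ℝ) hp, HasDerivAt ψp' (ψp'' x) x)
    (hψm : ∀ x ∈ Icc (-hm) (0:ℝ), HasDerivAt ψm (ψm' x) x)
    (hψm' : ∀ x ∈ Icc (-hm) (0:ℝ), HasDerivAt ψm' (ψm'' x) x)
    (hodep : ∀ x ∈ Icc (0:ℝ) hp,
      HasDerivAt (fun t => ((Up t : ℂ) - c) ^ 2 * ψp' t)
        ((k : ℂ) ^ 2 * ((Up x : ℂ) - c) ^ 2 * ψp x) x)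
    (hodem : ∀ x ∈ Icc (-hm) (0:ℝ),
      HasDerivAt (fun t => ((Um t : ℂ) - c) ^ 2 * ψm' t)
        ((k : ℂ) ^ 2 * ((Um x : ℂ) - c) ^ 2 * ψm x) x)
    (hbp : ψp hp = 0) (hbm : ψm (-hm) = 0)
    (hnp : ψp 0 = -1) (hnm : ψm 0 = -1)
    (hfb : ((-g * (ρp - ρm) + σ * k ^ 2 : ℝ) : ℂ)
      = (ρp : ℂ) * ((Up 0 : ℂ) - c) ^ 2 * ψp' 0
        - (ρm : ℂ) * ((Um 0 : ℂ) - c) ^ 2 * ψm' 0) :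
    (∫ x in (0:ℝ)..hp, ρp * Up x * (k ^ 2 * ‖ψp x‖ ^ 2 + ‖ψp' x‖ ^ 2))
      + ∫ x in (-hm)..0, ρm * Um x * (k ^ 2 * ‖ψm x‖ ^ 2 + ‖ψm' x‖ ^ 2)
    = c.re * ((∫ x in (0:ℝ)..hp, ρp * (k ^ 2 * ‖ψp x‖ ^ 2 + ‖ψp' x‖ ^ 2))
        + ∫ x in (-hm)..0, ρm * (k ^ 2 * ‖ψm x‖ ^ 2 + ‖ψm' x‖ ^ 2)) := by
  have hRp := rayleigh_first_moment hhp.le (HasDerivAt.continuousOn hUp) hψp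
    (HasDerivAt.continuousOn hψp') hodep
  have hRm := rayleigh_first_moment (neg_nonpos.2 hhm.le) (HasDerivAt.continuousOn hUm) hψm
    (HasDerivAt.continuousOn hψm') hodem
  have hfb_im := congrArg Complex.im hfb
  rw [hbp, hnp] at hRp
  rw [hbm, hnm] at hRm
  simp only [map_zero, map_neg, map_one, mul_zero, mul_neg_one, zero_sub, sub_zero, neg_neg,
    Complex.neg_im] at hRp hRm
  simp only [mul_assoc, Complex.ofReal_im, Complex.sub_im, Complex.im_ofReal_mul] at hfb_im
  simp only [mul_assoc, intervalIntegral.integral_const_mul]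
  refine mul_left_cancel₀ (mul_ne_zero (by norm_num : (-2 : ℝ) ≠ 0) hcI) ?_
  linear_combination ρp * hRp + ρm * hRm - hfb_im

/-- First-moment identity from the imaginary parts of the integrated Rayleigh identities
combined with the free boundary condition. -/
theorem first_moment_identity
    (hp hm : ℝ) (hhp : 0 < hp) (hhm : 0 < hm)
    (ρp ρm : ℝ) (hρp : 0 < ρp) (hρm : 0 < ρm)
    (g σ k : ℝ) (hσ : 0 < σ)
    (Up Up' : ℝ → ℝ)
    (hUp : ∀ x ∈ Icc (0:ℝ) hp, HasDerivAt Up (Up' x) x)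
    (hUpc : ContinuousOn Up' (Icc (0:ℝ) hp))
    (Um Um' : ℝ → ℝ)
    (hUm : ∀ x ∈ Icc (-hm) (0:ℝ), HasDerivAt Um (Um' x) x)
    (hUmc : ContinuousOn Um' (Icc (-hm) (0:ℝ)))
    (c : ℂ) (hcI : c.im ≠ 0)
    (ψp ψp' ψp'' ψm ψm' ψm'' : ℝ → ℂ)
    (hψp : ∀ x ∈ Icc (0:ℝ) hp, HasDerivAt ψp (ψp' x) x)
    (hψp' : ∀ x ∈ Icc (0:ℝ) hp, HasDerivAt ψp' (ψp'' x) x)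
    (hψpc : ContinuousOn ψp'' (Icc (0:ℝ) hp))
    (hψm : ∀ x ∈ Icc (-hm) (0:ℝ), HasDerivAt ψm (ψm' x) x)
    (hψm' : ∀ x ∈ Icc (-hm) (0:ℝ), HasDerivAt ψm' (ψm'' x) x)
    (hψmc : ContinuousOn ψm'' (Icc (-hm) (0:ℝ)))
    (hodep : ∀ x ∈ Icc (0:ℝ) hp,
      HasDerivAt (fun t => ((Up t : ℂ) - c) ^ 2 * ψp' t)
        ((k : ℂ) ^ 2 * ((Up x : ℂ) - c) ^ 2 * ψp x) x)
    (hodem : ∀ x ∈ Icc (-hm) (0:ℝ),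
      HasDerivAt (fun t => ((Um t : ℂ) - c) ^ 2 * ψm' t)
        ((k : ℂ) ^ 2 * ((Um x : ℂ) - c) ^ 2 * ψm x) x)
    (hbp : ψp hp = 0) (hbm : ψm (-hm) = 0)
    (hnp : ψp 0 = -1) (hnm : ψm 0 = -1)
    (hfb : ((-g * (ρp - ρm) + σ * k ^ 2 : ℝ) : ℂ)
      = (ρp : ℂ) * ((Up 0 : ℂ) - c) ^ 2 * ψp' 0
        - (ρm : ℂ) * ((Um 0 : ℂ) - c) ^ 2 * ψm' 0) :
    (∫ x in (0:ℝ)..hp, ρp * Up x * (k ^ 2 * ‖ψp x‖ ^ 2 + ‖ψp' x‖ ^ 2))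
      + ∫ x in (-hm)..0, ρm * Um x * (k ^ 2 * ‖ψm x‖ ^ 2 + ‖ψm' x‖ ^ 2)
    = c.re * ((∫ x in (0:ℝ)..hp, ρp * (k ^ 2 * ‖ψp x‖ ^ 2 + ‖ψp' x‖ ^ 2))
        + ∫ x in (-hm)..0, ρm * (k ^ 2 * ‖ψm x‖ ^ 2 + ‖ψm' x‖ ^ 2)) :=
  first_moment_identity_general hp hm hhp hhm ρp ρm g σ k Up Up' hUp Um Um' hUm c hcI ψp ψp' ψp'' ψm
    ψm' ψm'' hψp hψp' hψm hψm' hodep hodem hbp hbm hnp hnm hfb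
end

section
/- Let h₋ > 0, U⁻ ∈ C²([−h₋, 0]; ℝ), and k ∈ ℝ. For c ∈ ℝ \ U⁻([−h₋, 0]), let y⁻(c, k, ·) be the unique solution on [−h₋, 0] of the Rayleigh equation −y'' + (k² + (U⁻)''/(U⁻ − c)) y = 0 with y(−h₋) = 0, y'(−h₋) = 1. Then y⁻(c, k, 0) ≠ 0, and the function c ↦ Y⁻(c, k) := (y⁻)'(c, k, 0)/y⁻(c, k, 0) is differentiable on the open set ℝ \ U⁻([−h₋, 0]) with ∂_c Y⁻(c, k) = y⁻(c, k, 0)^{−2} ∫_{−h₋}^{0} ( (U⁻)''(x) / (U⁻(x) − c)² ) y⁻(c, k, x)² dx. In particular, if (U⁻)'' > 0 on [−h₋, 0], then ∂_c Y⁻(c, k) > 0 for all such c. -/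
/-!
With `W = (U - c) u' - U' u`, every solution of `u'' = (k² + U'' / (U - c)) u` satisfies
`(W u / (U - c))' = k² u² + (W / (U - c))² ≥ 0`, and at a point where `u = 0` the right-hand side
is `u'²`. Integrating over `[a, b]` shows that `u(a) = 0 ≠ u'(a)` forces `u(b) ≠ 0`.

For two parameters `c, c'` the Wronskian of `y(c)` and `y(c')` vanishes at `a` and has derivative
`(c' - c) U'' y(c) y(c') / ((U - c') (U - c))`, so the difference quotient of `y'/y` at `b` is
`∫ U'' y(c) y(c') / ((U - c') (U - c)) / (y(c', b) y(c, b))`. Grönwall's inequality gives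
`y(c', ·) → y(c, ·)` uniformly as `c' → c`, and dominated convergence identifies the limit.
If `U'' > 0` the limit is positive because its integrand is nonnegative and positive at `b`.
-/

open Set MeasureTheory intervalIntegral Filter Topology
open scoped NNReal Interval

theorem lipschitzWith_snd_prod_mul_fst {Q : ℝ} {K : ℝ≥0} (hK : 1 ≤ K) (hQ : |Q| ≤ K) :
    LipschitzWith K (fun w : ℝ × ℝ => (w.2, Q * w.1)) := by
  refine LipschitzWith.of_dist_le_mul fun w z => ?_
  simp only [Prod.dist_eq, Real.dist_eq, ← mul_sub, abs_mul]
  have h1 : (1 : ℝ) ≤ K := by exact_mod_cast hK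
  refine max_le ?_ ?_
  · calc |w.2 - z.2| ≤ 1 * max |w.1 - z.1| |w.2 - z.2| := by simp
      _ ≤ K * max |w.1 - z.1| |w.2 - z.2| := by gcongr
  · calc |Q| * |w.1 - z.1| ≤ K * max |w.1 - z.1| |w.2 - z.2| := by gcongr; exact le_max_left _ _

def SolvesSecondOrderOn (q : ℝ → ℝ) (a b : ℝ) (u u' : ℝ → ℝ) : Prop :=
  ∀ x ∈ Icc a b, HasDerivAt u (u' x) x ∧ HasDerivAt u' (q x * u x) x

namespace SolvesSecondOrderOn

variable {q p u u' v v' : ℝ → ℝ} {a b : ℝ}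

theorem continuousOn (h : SolvesSecondOrderOn q a b u u') : ContinuousOn u (Icc a b) :=
  HasDerivAt.continuousOn fun x hx => (h x hx).1

theorem continuousOn_deriv (h : SolvesSecondOrderOn q a b u u') : ContinuousOn u' (Icc a b) :=
  HasDerivAt.continuousOn fun x hx => (h x hx).2

theorem hasDerivAt_prod (h : SolvesSecondOrderOn q a b u u') {x : ℝ} (hx : x ∈ Icc a b) :
    HasDerivAt (fun t => (u t, u' t)) (u' x, q x * u x) x :=
  (h x hx).1.prodMk (h x hx).2

theorem dist_le_gronwallBound {K : ℝ≥0} {δ η : ℝ} (hu : SolvesSecondOrderOn q a b u u')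
    (hv : SolvesSecondOrderOn p a b v v') (hK : 1 ≤ K) (hq : ∀ x ∈ Icc a b, |q x| ≤ K)
    (hη : ∀ x ∈ Icc a b, |(p x - q x) * v x| ≤ η) (ha : dist (u a, u' a) (v a, v' a) ≤ δ) :
    ∀ x ∈ Icc a b, dist (u x, u' x) (v x, v' x) ≤ gronwallBound δ K η (x - a) := by
  have key := dist_le_of_approx_trajectories_ODE_of_mem (v := fun t w => (w.2, q t * w.1))
    (s := fun _ => univ) (εf := 0) (εg := η)
    (fun t ht =>
      (lipschitzWith_snd_prod_mul_fst hK (hq t (Ico_subset_Icc_self ht))).lipschitzOnWith)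
    (f := fun t => (u t, u' t)) (g := fun t => (v t, v' t))
    (fun x hx => (hu.hasDerivAt_prod hx).continuousAt.continuousWithinAt)
    (fun t ht => (hu.hasDerivAt_prod (Ico_subset_Icc_self ht)).hasDerivWithinAt)
    (fun t _ => by simp) (fun _ _ => mem_univ _)
    (fun x hx => (hv.hasDerivAt_prod hx).continuousAt.continuousWithinAt)
    (fun t ht => (hv.hasDerivAt_prod (Ico_subset_Icc_self ht)).hasDerivWithinAt)
    (fun t ht => by
      have h := hη t (Ico_subset_Icc_self ht)
      simpa [Prod.dist_eq, Real.dist_eq, ← sub_mul, (abs_nonneg _).trans h] using h)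
    (fun _ _ => mem_univ _) ha
  simpa using key

theorem tendstoUniformlyOn {ι : Type*} {l : Filter ι} {Q : ι → ℝ → ℝ} {Y Y' : ι → ℝ → ℝ}
    {K : ℝ} (hu : SolvesSecondOrderOn q a b u u') (hq : ∀ x ∈ Icc a b, |q x| ≤ K)
    (hQ : TendstoUniformlyOn Q q l (Icc a b))
    (hY : ∀ᶠ i in l, SolvesSecondOrderOn (Q i) a b (Y i) (Y' i))
    (hinit : ∀ᶠ i in l, Y i a = u a ∧ Y' i a = u' a) :
    TendstoUniformlyOn Y u l (Icc a b) := by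
  -- Compare `u` with the exact solutions `Y i` in the system of `Q i`: the error term then
  -- involves only `u`, which is bounded a priori.
  obtain ⟨B, hB⟩ := isCompact_Icc.exists_bound_of_continuousOn hu.continuousOn
  set L : ℝ≥0 := (max 1 (K + 1)).toNNReal
  have hL : (L : ℝ) = max 1 (K + 1) := Real.coe_toNNReal _ (zero_le_one.trans (le_max_left _ _))
  have hL1 : 1 ≤ L := by rw [← NNReal.coe_le_coe, hL]; exact le_max_left _ _
  have hgb : Tendsto (fun θ => gronwallBound 0 L (θ * B) (b - a)) (𝓝 0) (𝓝 0) := by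
    simpa [Function.comp_def, gronwallBound_ε0_δ0] using
      ((gronwallBound_continuous_ε 0 L (b - a)).comp (continuous_mul_const B)).tendsto 0
  rw [Metric.tendstoUniformlyOn_iff] at hQ ⊢
  intro ε hε
  obtain ⟨r, hr, hrε⟩ := Metric.eventually_nhds_iff.mp (hgb.eventually (gt_mem_nhds hε))
  filter_upwards [hQ 1 one_pos, hQ (r / 2) (half_pos hr), hY, hinit] with i hQ1 hQr hYi hYa x hx
  have hB0 : 0 ≤ B := (norm_nonneg _).trans (hB x hx)
  have hQL : ∀ t ∈ Icc a b, |Q i t| ≤ L := fun t ht => by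
    have h1 := hq t ht
    have h2 := (hQ1 t ht).le
    rw [Real.dist_eq, abs_sub_comm] at h2
    rw [hL]
    linarith [abs_sub_abs_le_abs_sub (Q i t) (q t), le_max_right 1 (K + 1)]
  have herr : ∀ t ∈ Icc a b, |(q t - Q i t) * u t| ≤ r / 2 * B := fun t ht => by
    rw [abs_mul]
    exact mul_le_mul (hQr t ht).le (hB t ht) (abs_nonneg _) (half_pos hr).le
  have hgron := dist_le_gronwallBound (δ := 0) hYi hu hL1 hQL herr (by simp [hYa.1, hYa.2]) x hx
  calc dist (u x) (Y i x) ≤ dist (Y i x, Y' i x) (u x, u' x) := by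
        rw [dist_comm]; exact le_max_left _ _
    _ ≤ gronwallBound 0 L (r / 2 * B) (x - a) := hgron
    _ ≤ gronwallBound 0 L (r / 2 * B) (b - a) :=
        gronwallBound_mono le_rfl (by positivity) L.2 (by linarith [hx.2])
    _ < ε := hrε (by rw [Real.dist_eq, sub_zero, abs_of_pos (half_pos hr)]; linarith)

theorem integral_eq_wronskian_sub (hab : a ≤ b) (hu : SolvesSecondOrderOn q a b u u')
    (hv : SolvesSecondOrderOn p a b v v') (hq : ContinuousOn q (Icc a b))
    (hp : ContinuousOn p (Icc a b)) :
    ∫ x in a..b, (p x - q x) * (u x * v x) =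
      (u b * v' b - u' b * v b) - (u a * v' a - u' a * v a) := by
  have hcont := (hp.sub hq).mul (hu.continuousOn.mul hv.continuousOn)
  rw [← uIcc_of_le hab] at hcont
  refine integral_eq_sub_of_hasDerivAt (f := fun x => u x * v' x - u' x * v x)
    (fun x hx => ?_) hcont.intervalIntegrable
  rw [uIcc_of_le hab] at hx
  exact (((hu x hx).1.mul (hv x hx).2).sub ((hu x hx).2.mul (hv x hx).1)).congr_deriv
    (by ring)

end SolvesSecondOrderOn

section OffRange

variable {U : ℝ → ℝ} {s : Set ℝ} {c : ℝ}

theorem exists_pos_eventually_le_abs_sub (hs : IsCompact s) (hU : ContinuousOn U s)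
    (hc : ∀ x ∈ s, U x ≠ c) : ∃ d > 0, ∀ᶠ c' in 𝓝 c, ∀ x ∈ s, d ≤ |U x - c'| := by
  have hcU : c ∉ U '' s := fun ⟨x, hx, hxc⟩ => hc x hx hxc
  obtain ⟨r, hr, hball⟩ :=
    Metric.mem_nhds_iff.mp ((hs.image_of_continuousOn hU).isClosed.isOpen_compl.mem_nhds hcU)
  refine ⟨r / 2, half_pos hr, ?_⟩
  filter_upwards [Metric.ball_mem_nhds c (half_pos hr)] with c' hc' x hx
  by_contra! hlt
  refine hball ?_ (mem_image_of_mem U hx)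
  rw [Metric.mem_ball, Real.dist_eq] at hc' ⊢
  calc |U x - c| ≤ |U x - c'| + |c' - c| := abs_sub_le _ _ _
    _ < r := by linarith

theorem eventually_forall_ne_of_isCompact (hs : IsCompact s) (hU : ContinuousOn U s)
    (hc : ∀ x ∈ s, U x ≠ c) : ∀ᶠ c' in 𝓝 c, ∀ x ∈ s, U x ≠ c' := by
  obtain ⟨d, hd, hdU⟩ := exists_pos_eventually_le_abs_sub hs hU hc
  filter_upwards [hdU] with c' hc' x hx hxc'
  have := hc' x hx
  rw [hxc', sub_self, abs_zero] at this
  linarith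

end OffRange

noncomputable def rayleighPotential (U U'' : ℝ → ℝ) (k c x : ℝ) : ℝ := k ^ 2 + U'' x / (U x - c)

def IsRayleighFundamentalSolution (U U'' : ℝ → ℝ) (k a b : ℝ) (y y' : ℝ → ℝ → ℝ) : Prop :=
  ∀ c, (∀ x ∈ Icc a b, U x ≠ c) →
    SolvesSecondOrderOn (rayleighPotential U U'' k c) a b (y c) (y' c) ∧ y c a = 0 ∧ y' c a = 1

section Rayleigh

variable {U U' U'' u u' : ℝ → ℝ} {k a b c : ℝ}

theorem continuousOn_rayleighPotential (hU : ContinuousOn U (Icc a b))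
    (hU'' : ContinuousOn U'' (Icc a b)) (hc : ∀ x ∈ Icc a b, U x ≠ c) :
    ContinuousOn (rayleighPotential U U'' k c) (Icc a b) :=
  continuousOn_const.add (hU''.div (hU.sub continuousOn_const) fun x hx => sub_ne_zero.2 (hc x hx))

theorem rayleighPotential_sub {x c' : ℝ} (hc : U x ≠ c) (hc' : U x ≠ c') :
    rayleighPotential U U'' k c' x - rayleighPotential U U'' k c x =
      (c' - c) * (U'' x / ((U x - c') * (U x - c))) := by
  have := sub_ne_zero.2 hc
  have := sub_ne_zero.2 hc'
  unfold rayleighPotential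
  field_simp
  ring

theorem exists_eventually_abs_div_le (hU : ContinuousOn U (Icc a b))
    (hU'' : ContinuousOn U'' (Icc a b)) (hc : ∀ x ∈ Icc a b, U x ≠ c) :
    ∃ C, ∀ᶠ c' in 𝓝 c, ∀ x ∈ Icc a b, |U'' x / ((U x - c') * (U x - c))| ≤ C := by
  obtain ⟨d, hd, hdU⟩ := exists_pos_eventually_le_abs_sub isCompact_Icc hU hc
  obtain ⟨M, hM⟩ := isCompact_Icc.exists_bound_of_continuousOn hU''
  refine ⟨M / (d * d), ?_⟩
  filter_upwards [hdU] with c' hdc' x hx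
  rw [abs_div, abs_mul]
  exact div_le_div₀ ((abs_nonneg _).trans (hM x hx)) (hM x hx) (by positivity)
    (mul_le_mul (hdc' x hx) (hdU.self_of_nhds x hx) hd.le (abs_nonneg _))

theorem tendstoUniformlyOn_rayleighPotential (hU : ContinuousOn U (Icc a b))
    (hU'' : ContinuousOn U'' (Icc a b)) (hc : ∀ x ∈ Icc a b, U x ≠ c) :
    TendstoUniformlyOn (rayleighPotential U U'' k) (rayleighPotential U U'' k c) (𝓝 c)
      (Icc a b) := by
  obtain ⟨C, hC⟩ := exists_eventually_abs_div_le hU hU'' hc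
  have hlim : Tendsto (fun c' => |c' - c| * C) (𝓝 c) (𝓝 0) := by
    simpa using ((tendsto_id (x := 𝓝 c)).sub_const c).abs.mul_const C
  rw [Metric.tendstoUniformlyOn_iff]
  intro ε hε
  filter_upwards [hC, eventually_forall_ne_of_isCompact isCompact_Icc hU hc,
    hlim.eventually (gt_mem_nhds hε)] with c' hCc' hc' hε' x hx
  rw [dist_comm, Real.dist_eq, rayleighPotential_sub (hc x hx) (hc' x hx), abs_mul]
  exact (mul_le_mul_of_nonneg_left (hCc' x hx) (abs_nonneg _)).trans_lt hε'

theorem IsRayleighFundamentalSolution.tendstoUniformlyOn {y y' : ℝ → ℝ → ℝ}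
    (hy : IsRayleighFundamentalSolution U U'' k a b y y') (hU : ContinuousOn U (Icc a b))
    (hU'' : ContinuousOn U'' (Icc a b)) (hc : ∀ x ∈ Icc a b, U x ≠ c) :
    TendstoUniformlyOn y (y c) (𝓝 c) (Icc a b) := by
  obtain ⟨K, hK⟩ :=
    isCompact_Icc.exists_bound_of_continuousOn (continuousOn_rayleighPotential (k := k) hU hU'' hc)
  have hoff := eventually_forall_ne_of_isCompact isCompact_Icc hU hc
  obtain ⟨hsol, h0, h1⟩ := hy c hc
  refine hsol.tendstoUniformlyOn hK (tendstoUniformlyOn_rayleighPotential hU hU'' hc)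
    (hoff.mono fun c' hc' => (hy c' hc').1) (hoff.mono fun c' hc' => ?_)
  rw [h0, h1]
  exact (hy c' hc').2

theorem continuousAt_rayleigh_integral (hab : a ≤ b) (hU : ContinuousOn U (Icc a b))
    (hU'' : ContinuousOn U'' (Icc a b)) (hc : ∀ x ∈ Icc a b, U x ≠ c) {Y : ℝ → ℝ → ℝ}
    (hY : TendstoUniformlyOn Y (Y c) (𝓝 c) (Icc a b))
    (hYc : ∀ᶠ c' in 𝓝 c, ContinuousOn (Y c') (Icc a b)) :
    ContinuousAt
      (fun c' => ∫ x in a..b, U'' x / ((U x - c') * (U x - c)) * (Y c x * Y c' x)) c := by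
  obtain ⟨C, hC⟩ := exists_eventually_abs_div_le hU hU'' hc
  obtain ⟨B, hB⟩ := isCompact_Icc.exists_bound_of_continuousOn hYc.self_of_nhds
  have hYB : ∀ᶠ c' in 𝓝 c, ∀ x ∈ Icc a b, |Y c' x| ≤ B + 1 := by
    filter_upwards [Metric.tendstoUniformlyOn_iff.mp hY 1 one_pos] with c' hc' x hx
    have h1 := hB x hx
    have h2 := hc' x hx
    rw [Real.norm_eq_abs] at h1
    rw [Real.dist_eq, abs_sub_comm] at h2
    linarith [abs_sub_abs_le_abs_sub (Y c' x) (Y c x)]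
  have hIoc : Ι a b ⊆ Icc a b := by rw [uIoc_of_le hab]; exact Ioc_subset_Icc_self
  refine continuousAt_of_dominated_interval (bound := fun _ => C * (B * (B + 1))) ?_ ?_
    intervalIntegrable_const (ae_of_all _ fun x hx => ?_)
  · filter_upwards [eventually_forall_ne_of_isCompact isCompact_Icc hU hc, hYc] with c' hc' hYc'
    refine ContinuousOn.aestronglyMeasurable (ContinuousOn.mono ?_ hIoc) measurableSet_uIoc
    exact (hU''.div ((hU.sub continuousOn_const).mul (hU.sub continuousOn_const)) fun x hx =>
      mul_ne_zero (sub_ne_zero.2 (hc' x hx)) (sub_ne_zero.2 (hc x hx))).mul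
      (hYc.self_of_nhds.mul hYc')
  · filter_upwards [hC, hYB] with c' hCc' hYc'
    refine ae_of_all _ fun x hx => ?_
    rw [Real.norm_eq_abs, abs_mul, abs_mul]
    exact mul_le_mul (hCc' x (hIoc hx)) (mul_le_mul (hB x (hIoc hx)) (hYc' x (hIoc hx))
      (abs_nonneg _) ((norm_nonneg _).trans (hB x (hIoc hx)))) (by positivity)
      ((abs_nonneg _).trans (hCc' x (hIoc hx)))
  · have hne : U x - c ≠ 0 := sub_ne_zero.2 (hc x (hIoc hx))
    exact (continuousAt_const.div ((continuousAt_const.sub continuousAt_id).mul continuousAt_const)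
      (mul_ne_zero hne hne)).mul (continuousAt_const.mul (hY.tendsto_at (hIoc hx)))

theorem rayleigh_solution_right_ne_zero (hab : a < b) (hU : ∀ x ∈ Icc a b, HasDerivAt U (U' x) x)
    (hU' : ∀ x ∈ Icc a b, HasDerivAt U' (U'' x) x) (hc : ∀ x ∈ Icc a b, U x ≠ c)
    (hu : SolvesSecondOrderOn (rayleighPotential U U'' k c) a b u u') (ha : u a = 0)
    (ha' : u' a ≠ 0) :
    u b ≠ 0 := by
  intro hb
  set W : ℝ → ℝ := fun x => u' x * (U x - c) - U' x * u x
  set g : ℝ → ℝ := fun x => k ^ 2 * u x ^ 2 + (W x / (U x - c)) ^ 2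
  have hderiv : ∀ x ∈ Icc a b, HasDerivAt (fun x => W x * (u x / (U x - c))) (g x) x := by
    intro x hx
    have hne : U x - c ≠ 0 := sub_ne_zero.2 (hc x hx)
    obtain ⟨hu₁, hu₂⟩ := hu x hx
    refine ((hu₂.mul ((hU x hx).sub_const c)).sub ((hU' x hx).mul hu₁)).mul
      (hu₁.div ((hU x hx).sub_const c) hne) |>.congr_deriv ?_
    simp only [g, W, rayleighPotential, Pi.mul_apply, Pi.sub_apply, Pi.div_apply]
    field_simp
    ring
  have hUc := HasDerivAt.continuousOn hU
  have hg : ContinuousOn g (Icc a b) :=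
    (continuousOn_const.mul (hu.continuousOn.pow 2)).add
      ((((hu.continuousOn_deriv.mul (hUc.sub continuousOn_const)).sub
        ((HasDerivAt.continuousOn hU').mul hu.continuousOn)).div (hUc.sub continuousOn_const)
        fun x hx => sub_ne_zero.2 (hc x hx)).pow 2)
  have hpos : 0 < ∫ x in a..b, g x := by
    refine integral_pos hab hg (fun x _ => by positivity) ⟨a, left_mem_Icc.2 hab.le, ?_⟩
    have hne : U a - c ≠ 0 := sub_ne_zero.2 (hc a (left_mem_Icc.2 hab.le))
    simp only [g, W, ha, mul_zero, sub_zero, mul_div_cancel_right₀ _ hne]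
    positivity
  have hzero : ∫ x in a..b, g x = 0 := by
    rw [integral_eq_sub_of_hasDerivAt (fun x hx => hderiv x (uIcc_of_le hab.le ▸ hx))
      (hg.mono (uIcc_of_le hab.le).subset |>.intervalIntegrable)]
    simp [ha, hb]
  exact hpos.ne' hzero

theorem integral_rayleigh_pos (hab : a < b) (hU : ContinuousOn U (Icc a b))
    (hU'' : ContinuousOn U'' (Icc a b)) (hc : ∀ x ∈ Icc a b, U x ≠ c)
    (hpos : ∀ x ∈ Icc a b, 0 < U'' x) (hu : ContinuousOn u (Icc a b)) (hub : u b ≠ 0) :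
    0 < ∫ x in a..b, U'' x / (U x - c) ^ 2 * u x ^ 2 := by
  refine integral_pos hab ((hU''.div ((hU.sub continuousOn_const).pow 2) fun x hx =>
    pow_ne_zero 2 (sub_ne_zero.2 (hc x hx))).mul (hu.pow 2))
    (fun x hx => by have := hpos x (Ioc_subset_Icc_self hx); positivity)
    ⟨b, right_mem_Icc.2 hab.le, ?_⟩
  have := hpos b (right_mem_Icc.2 hab.le)
  have := sub_ne_zero.2 (hc b (right_mem_Icc.2 hab.le))
  positivity

theorem IsRayleighFundamentalSolution.slope_eq {y y' : ℝ → ℝ → ℝ} {c' : ℝ}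
    (hy : IsRayleighFundamentalSolution U U'' k a b y y') (hab : a ≤ b)
    (hU : ContinuousOn U (Icc a b)) (hU'' : ContinuousOn U'' (Icc a b))
    (hc : ∀ x ∈ Icc a b, U x ≠ c) (hc' : ∀ x ∈ Icc a b, U x ≠ c') (hcc' : c' ≠ c)
    (hb : y c b ≠ 0) (hb' : y c' b ≠ 0) :
    slope (fun c => y' c b / y c b) c c' =
      (∫ x in a..b, U'' x / ((U x - c') * (U x - c)) * (y c x * y c' x)) / (y c' b * y c b) := by
  have hW := SolvesSecondOrderOn.integral_eq_wronskian_sub hab (hy c hc).1 (hy c' hc').1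
    (continuousOn_rayleighPotential hU hU'' hc) (continuousOn_rayleighPotential hU hU'' hc')
  have hWN : ∫ x in a..b, (rayleighPotential U U'' k c' x - rayleighPotential U U'' k c x) *
      (y c x * y c' x) =
        (c' - c) * ∫ x in a..b, U'' x / ((U x - c') * (U x - c)) * (y c x * y c' x) := by
    rw [← intervalIntegral.integral_const_mul]
    refine integral_congr fun x hx => ?_
    rw [uIcc_of_le hab] at hx
    simp only [rayleighPotential_sub (hc x hx) (hc' x hx)]
    ring
  rw [hWN, (hy c hc).2.1, (hy c' hc').2.1] at hW
  generalize (∫ x in a..b, U'' x / ((U x - c') * (U x - c)) * (y c x * y c' x)) = N at hW ⊢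
  have := sub_ne_zero.2 hcc'
  rw [slope_def_field]
  field_simp
  linear_combination -hW

theorem IsRayleighFundamentalSolution.hasDerivAt {y y' : ℝ → ℝ → ℝ}
    (hy : IsRayleighFundamentalSolution U U'' k a b y y') (hab : a < b)
    (hU : ∀ x ∈ Icc a b, HasDerivAt U (U' x) x) (hU' : ∀ x ∈ Icc a b, HasDerivAt U' (U'' x) x)
    (hU'' : ContinuousOn U'' (Icc a b)) (hc : ∀ x ∈ Icc a b, U x ≠ c) :
    HasDerivAt (fun c' => y' c' b / y c' b)
      ((∫ x in a..b, U'' x / (U x - c) ^ 2 * y c x ^ 2) / y c b ^ 2) c := by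
  have hUc := HasDerivAt.continuousOn hU
  have hoff := eventually_forall_ne_of_isCompact isCompact_Icc hUc hc
  have hne : ∀ c', (∀ x ∈ Icc a b, U x ≠ c') → y c' b ≠ 0 := fun c' hc' =>
    rayleigh_solution_right_ne_zero hab hU hU' hc' (hy c' hc').1 (hy c' hc').2.1
      ((hy c' hc').2.2 ▸ one_ne_zero)
  set N : ℝ → ℝ := fun c' => ∫ x in a..b, U'' x / ((U x - c') * (U x - c)) * (y c x * y c' x)
  have hslope : ∀ᶠ c' in 𝓝[≠] c,
      N c' / (y c' b * y c b) = slope (fun c' => y' c' b / y c' b) c c' := by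
    filter_upwards [nhdsWithin_le_nhds hoff, self_mem_nhdsWithin] with c' hc' hcc'
    exact (hy.slope_eq hab.le hUc hU'' hc hc' hcc' (hne c hc) (hne c' hc')).symm
  have hyT := hy.tendstoUniformlyOn hUc hU'' hc
  have hN : ContinuousAt N c := continuousAt_rayleigh_integral hab.le hUc hU'' hc hyT
    (hoff.mono fun c' hc' => (hy c' hc').1.continuousOn)
  have hyb : ContinuousAt (fun c' => y c' b) c := hyT.tendsto_at (right_mem_Icc.2 hab.le)
  have hval : N c / (y c b * y c b) =
      (∫ x in a..b, U'' x / (U x - c) ^ 2 * y c x ^ 2) / y c b ^ 2 := by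
    rw [sq (y c b)]
    congr 1
    exact integral_congr fun x _ => by ring
  rw [hasDerivAt_iff_tendsto_slope, ← hval]
  exact ((hN.div (hyb.mul continuousAt_const) (mul_ne_zero (hne c hc) (hne c hc))).tendsto.mono_left
    nhdsWithin_le_nhds).congr' hslope

end Rayleigh

/-- Derivative in `c` of `Y⁻(c, k) = (y⁻)'(c,k,0)/y⁻(c,k,0)` for the lower fundamental
solution of the Rayleigh equation, for real `c` off the range of `U⁻`. -/
theorem deriv_c_Y_minus
    (hm : ℝ) (hhm : 0 < hm)
    (Um Um' Um'' : ℝ → ℝ)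
    (hUm : ∀ x ∈ Icc (-hm) (0:ℝ), HasDerivAt Um (Um' x) x)
    (hUm' : ∀ x ∈ Icc (-hm) (0:ℝ), HasDerivAt Um' (Um'' x) x)
    (hUmc : ContinuousOn Um'' (Icc (-hm) (0:ℝ)))
    (k : ℝ)
    (y y' y'' : ℝ → ℝ → ℝ)
    (hsol : ∀ c : ℝ, (∀ x ∈ Icc (-hm) (0:ℝ), Um x ≠ c) →
      (∀ x ∈ Icc (-hm) (0:ℝ),
        HasDerivAt (y c) (y' c x) x ∧ HasDerivAt (y' c) (y'' c x) x ∧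
        -y'' c x + (k ^ 2 + Um'' x / (Um x - c)) * y c x = 0) ∧
      y c (-hm) = 0 ∧ y' c (-hm) = 1) :
    ∀ c : ℝ, (∀ x ∈ Icc (-hm) (0:ℝ), Um x ≠ c) →
      y c 0 ≠ 0 ∧
      HasDerivAt (fun c' => y' c' 0 / y c' 0)
        ((∫ x in (-hm)..0, Um'' x / (Um x - c) ^ 2 * y c x ^ 2) / y c 0 ^ 2) c ∧
      ((∀ x ∈ Icc (-hm) (0:ℝ), 0 < Um'' x) →
        0 < (∫ x in (-hm)..0, Um'' x / (Um x - c) ^ 2 * y c x ^ 2) / y c 0 ^ 2) := by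
  have hab : -hm < 0 := neg_lt_zero.2 hhm
  have hy : IsRayleighFundamentalSolution Um Um'' k (-hm) 0 y y' := fun c hc => by
    obtain ⟨hode, h0, h1⟩ := hsol c hc
    refine ⟨fun x hx => ⟨(hode x hx).1, (hode x hx).2.1.congr_deriv ?_⟩, h0, h1⟩
    rw [rayleighPotential]
    linear_combination -(hode x hx).2.2
  intro c hc
  obtain ⟨hsolc, h0, h1⟩ := hy c hc
  have hne : y c 0 ≠ 0 :=
    rayleigh_solution_right_ne_zero hab hUm hUm' hc hsolc h0 (h1 ▸ one_ne_zero)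
  refine ⟨hne, hy.hasDerivAt hab hUm hUm' hUmc hc, fun hpos => div_pos ?_ (by positivity)⟩
  exact integral_rayleigh_pos hab (HasDerivAt.continuousOn hUm) hUmc hc hpos hsolc.continuousOn hne
end

section
/- Let h₊ > 0, U⁺ ∈ C²([0, h₊]; ℝ), and k ∈ ℝ. For c ∈ ℝ \ U⁺([0, h₊]), let y⁺(c, k, ·) be the unique solution on [0, h₊] of the Rayleigh equation −y'' + (k² + (U⁺)''/(U⁺ − c)) y = 0 with y(h₊) = 0, y'(h₊) = 1. Then y⁺(c, k, 0) ≠ 0, and the function c ↦ Y⁺(c, k) := (y⁺)'(c, k, 0)/y⁺(c, k, 0) is differentiable on the open set ℝ \ U⁺([0, h₊]) with ∂_c Y⁺(c, k) = − y⁺(c, k, 0)^{−2} ∫_{0}^{h₊} ( (U⁺)''(x) / (U⁺(x) − c)² ) y⁺(c, k, x)² dx. In particular, if (U⁺)'' > 0 on [0, h₊], then ∂_c Y⁺(c, k) < 0 for all such c. -/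
open Set MeasureTheory intervalIntegral

open Filter Topology Real

/-!
Write `q_c = k² + U''/(U - c)`. Substituting `y = (U - c) φ` turns `y'' = q_c y` into
`((U - c)² φ')' = k² (U - c)² φ`, where `(U - c)² φ' = y' (U - c) - U' y`. Hence `(U - c)² φ' φ`,
which vanishes wherever `y` does, has the nonnegative derivative `k² y² + ((U - c) φ')²`, equal to
`y'(h₊)² > 0` at `h₊`; so it cannot vanish at both `0` and `h₊`, and `y(0) ≠ 0`.

For two admissible `c, c'` the Wronskian of `y(c, ·)` and `y(c', ·)` vanishes at `h₊` and has
derivative `(q_{c'} - q_c) y(c, ·) y(c', ·)`, which gives the difference quotient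
`(Y(c') - Y(c)) / (c' - c) = -∫ U'' y(c, ·) y(c', ·) / ((U - c)(U - c')) / (y(c, 0) y(c', 0))`.
Grönwall's inequality makes `y(c', ·) → y(c, ·)` uniformly as `c' → c`, and dominated convergence
passes to the limit.
-/

def IsSolutionOn (q y y' : ℝ → ℝ) (s : Set ℝ) : Prop :=
  ∀ x ∈ s, HasDerivAt y (y' x) x ∧ HasDerivAt y' (q x * y x) x

theorem gronwallBound_zero_le {K ε x T : ℝ} (hK : 0 < K) (hε : 0 ≤ ε) (hxT : x ≤ T) :
    gronwallBound 0 K ε x ≤ ε / K * exp (K * T) := by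
  simp only [gronwallBound_of_K_ne_0 hK.ne', zero_mul, zero_add]
  have hexp : exp (K * x) ≤ exp (K * T) := exp_le_exp.2 (by gcongr)
  exact mul_le_mul_of_nonneg_left (by linarith) (div_nonneg hε hK.le)

theorem norm_sub_linearSystem_le {L ε q₁ q₂ u₁ u₂ w₁ w₂ : ℝ} (hL : 1 ≤ L) (hq : |q₂| ≤ L)
    (hε : |(q₂ - q₁) * u₁| ≤ ε) :
    ‖(w₂ - w₁, q₂ * u₂ - q₁ * u₁)‖ ≤ L * ‖(u₂ - u₁, w₂ - w₁)‖ + ε := by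
  have hε₀ : 0 ≤ ε := (abs_nonneg _).trans hε
  have hu : |u₂ - u₁| ≤ ‖(u₂ - u₁, w₂ - w₁)‖ := norm_fst_le (u₂ - u₁, w₂ - w₁)
  have hw : |w₂ - w₁| ≤ ‖(u₂ - u₁, w₂ - w₁)‖ := norm_snd_le (u₂ - u₁, w₂ - w₁)
  have hL' : ‖(u₂ - u₁, w₂ - w₁)‖ ≤ L * ‖(u₂ - u₁, w₂ - w₁)‖ :=
    le_mul_of_one_le_left (norm_nonneg _) hL
  refine max_le (by rw [Real.norm_eq_abs]; linarith) ?_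
  calc ‖q₂ * u₂ - q₁ * u₁‖ = |q₂ * (u₂ - u₁) + (q₂ - q₁) * u₁| := by
        rw [Real.norm_eq_abs]; ring_nf
    _ ≤ |q₂| * |u₂ - u₁| + ε := (abs_add_le _ _).trans (by rw [abs_mul]; linarith)
    _ ≤ L * ‖(u₂ - u₁, w₂ - w₁)‖ + ε := by gcongr

namespace IsSolutionOn

variable {q q₁ q₂ y y' y₁ y₁' y₂ y₂' : ℝ → ℝ} {a b L ε : ℝ}

theorem continuousOn {s : Set ℝ} (h : IsSolutionOn q y y' s) : ContinuousOn y s :=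
  HasDerivAt.continuousOn fun x hx => (h x hx).1

theorem continuousOn_deriv {s : Set ℝ} (h : IsSolutionOn q y y' s) : ContinuousOn y' s :=
  HasDerivAt.continuousOn fun x hx => (h x hx).2

theorem reflect (h : IsSolutionOn q y y' (Icc a b)) :
    IsSolutionOn (fun x => q (a + b - x)) (fun x => y (a + b - x)) (fun x => -y' (a + b - x))
      (Icc a b) := by
  intro x hx
  obtain ⟨hy, hy'⟩ := h (a + b - x) ⟨by linarith [hx.2], by linarith [hx.1]⟩
  exact ⟨hy.comp_const_sub (a + b) x, by simpa using (hy'.comp_const_sub (a + b) x).fun_neg⟩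

theorem wronskian_sub_eq_integral (hab : a ≤ b) (h₁ : IsSolutionOn q₁ y₁ y₁' (Icc a b))
    (h₂ : IsSolutionOn q₂ y₂ y₂' (Icc a b)) (hq₁ : ContinuousOn q₁ (Icc a b))
    (hq₂ : ContinuousOn q₂ (Icc a b)) :
    (y₁ b * y₂' b - y₁' b * y₂ b) - (y₁ a * y₂' a - y₁' a * y₂ a) =
      ∫ x in a..b, (q₂ x - q₁ x) * (y₁ x * y₂ x) := by
  refine (integral_eq_sub_of_hasDerivAt (f := fun x => y₁ x * y₂' x - y₁' x * y₂ x)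
    (fun x hx => ?_) ?_).symm
  · rw [uIcc_of_le hab] at hx
    obtain ⟨hy₁, hy₁'⟩ := h₁ x hx
    obtain ⟨hy₂, hy₂'⟩ := h₂ x hx
    convert (hy₁.fun_mul hy₂').fun_sub (hy₁'.fun_mul hy₂) using 1
    ring
  · exact ((hq₂.sub hq₁).mul (h₁.continuousOn.mul h₂.continuousOn)).intervalIntegrable_of_Icc hab

theorem abs_sub_le_of_eq_left (hL : 1 ≤ L) (h₁ : IsSolutionOn q₁ y₁ y₁' (Icc a b))
    (h₂ : IsSolutionOn q₂ y₂ y₂' (Icc a b)) (hq₂ : ∀ x ∈ Icc a b, |q₂ x| ≤ L)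
    (hε : ∀ x ∈ Icc a b, |(q₂ x - q₁ x) * y₁ x| ≤ ε) (hy : y₂ a = y₁ a) (hy' : y₂' a = y₁' a)
    {x : ℝ} (hx : x ∈ Icc a b) : |y₂ x - y₁ x| ≤ ε / L * exp (L * (b - a)) := by
  set f : ℝ → ℝ × ℝ := fun t => (y₂ t - y₁ t, y₂' t - y₁' t)
  have hf : ContinuousOn f (Icc a b) := (h₂.continuousOn.sub h₁.continuousOn).prodMk
    (h₂.continuousOn_deriv.sub h₁.continuousOn_deriv)
  have hf' : ∀ t ∈ Ico a b, HasDerivWithinAt f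
      (y₂' t - y₁' t, q₂ t * y₂ t - q₁ t * y₁ t) (Ici t) t := fun t ht =>
    (((h₂ t (Ico_subset_Icc_self ht)).1.sub (h₁ t (Ico_subset_Icc_self ht)).1).prodMk
      ((h₂ t (Ico_subset_Icc_self ht)).2.sub (h₁ t (Ico_subset_Icc_self ht)).2)).hasDerivWithinAt
  have hgronwall := norm_le_gronwallBound_of_norm_deriv_right_le (δ := 0) hf hf'
    (by simp [f, hy, hy'])
    (fun t ht => norm_sub_linearSystem_le hL (hq₂ t (Ico_subset_Icc_self ht))
      (hε t (Ico_subset_Icc_self ht))) x hx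
  calc |y₂ x - y₁ x| ≤ ‖f x‖ := norm_fst_le (f x)
    _ ≤ gronwallBound 0 L ε (x - a) := hgronwall
    _ ≤ ε / L * exp (L * (b - a)) := gronwallBound_zero_le (by linarith)
      ((abs_nonneg _).trans (hε x hx)) (by linarith [hx.2])

theorem abs_sub_le_of_eq_right (hL : 1 ≤ L) (h₁ : IsSolutionOn q₁ y₁ y₁' (Icc a b))
    (h₂ : IsSolutionOn q₂ y₂ y₂' (Icc a b)) (hq₂ : ∀ x ∈ Icc a b, |q₂ x| ≤ L)
    (hε : ∀ x ∈ Icc a b, |(q₂ x - q₁ x) * y₁ x| ≤ ε) (hy : y₂ b = y₁ b) (hy' : y₂' b = y₁' b)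
    {x : ℝ} (hx : x ∈ Icc a b) : |y₂ x - y₁ x| ≤ ε / L * exp (L * (b - a)) := by
  have hx' : a + b - x ∈ Icc a b := ⟨by linarith [hx.2], by linarith [hx.1]⟩
  simpa using abs_sub_le_of_eq_left hL h₁.reflect h₂.reflect
    (fun t ht => hq₂ _ ⟨by linarith [ht.2], by linarith [ht.1]⟩)
    (fun t ht => hε _ ⟨by linarith [ht.2], by linarith [ht.1]⟩) (by simpa using hy)
    (by simpa using hy') hx'

end IsSolutionOn

theorem IsCompact.exists_pos_eventually_forall_le_abs_sub {K : Set ℝ} (hK : IsCompact K)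
    {g : ℝ → ℝ} (hg : ContinuousOn g K) {c : ℝ} (hc : ∀ x ∈ K, g x ≠ c) :
    ∃ d > 0, ∀ᶠ c' in 𝓝 c, ∀ x ∈ K, d ≤ |g x - c'| := by
  obtain ⟨d, hd, hball⟩ := Metric.mem_nhds_iff.1
    ((hK.image_of_continuousOn hg).isClosed.compl_mem_nhds fun ⟨x, hx, hxc⟩ => hc x hx hxc)
  refine ⟨d / 2, half_pos hd, ?_⟩
  filter_upwards [Metric.ball_mem_nhds c (half_pos hd)] with c' hc' x hx
  have hgx : d ≤ |g x - c| := by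
    by_contra! h
    exact hball (by rwa [Metric.mem_ball, Real.dist_eq]) ⟨x, hx, rfl⟩
  rw [Metric.mem_ball, Real.dist_eq] at hc'
  linarith [abs_sub_le (g x) c' c]

theorem IsCompact.eventually_forall_ne {K : Set ℝ} (hK : IsCompact K) {g : ℝ → ℝ}
    (hg : ContinuousOn g K) {c : ℝ} (hc : ∀ x ∈ K, g x ≠ c) :
    ∀ᶠ c' in 𝓝 c, ∀ x ∈ K, g x ≠ c' := by
  obtain ⟨d, hd, hdist⟩ := hK.exists_pos_eventually_forall_le_abs_sub hg hc
  filter_upwards [hdist] with c' hc' x hx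
  exact sub_ne_zero.1 (abs_pos.1 (hd.trans_le (hc' x hx)))

theorem IsCompact.exists_eventually_forall_abs_div_sub_le {K : Set ℝ} (hK : IsCompact K)
    {f g : ℝ → ℝ} (hf : ContinuousOn f K) (hg : ContinuousOn g K) {c : ℝ}
    (hc : ∀ x ∈ K, g x ≠ c) : ∃ C, ∀ᶠ c' in 𝓝 c, ∀ x ∈ K, |f x / (g x - c')| ≤ C := by
  obtain ⟨M, hM⟩ := hK.exists_bound_of_continuousOn hf
  obtain ⟨d, hd, hdist⟩ := hK.exists_pos_eventually_forall_le_abs_sub hg hc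
  refine ⟨M / d, ?_⟩
  filter_upwards [hdist] with c' hc' x hx
  rw [abs_div]
  exact div_le_div₀ ((abs_nonneg _).trans (hM x hx)) (hM x hx) hd (hc' x hx)

noncomputable def rayleighCoeff (U U'' : ℝ → ℝ) (k c x : ℝ) : ℝ := k ^ 2 + U'' x / (U x - c)

section Rayleigh

variable {U U' U'' : ℝ → ℝ} {a b k c : ℝ}

theorem continuousOn_rayleighCoeff {s : Set ℝ} (hU : ContinuousOn U s) (hU'' : ContinuousOn U'' s)
    (hc : ∀ x ∈ s, U x ≠ c) : ContinuousOn (rayleighCoeff U U'' k c) s :=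
  continuousOn_const.add (hU''.div (hU.sub continuousOn_const) fun x hx => sub_ne_zero.2 (hc x hx))

theorem rayleighCoeff_sub {c' x : ℝ} (hc : U x ≠ c) (hc' : U x ≠ c') :
    rayleighCoeff U U'' k c' x - rayleighCoeff U U'' k c x =
      (c' - c) * (U'' x / (U x - c) / (U x - c')) := by
  have := sub_ne_zero.2 hc
  have := sub_ne_zero.2 hc'
  unfold rayleighCoeff
  field_simp
  ring

theorem hasDerivAt_rayleigh_flux {y y' : ℝ → ℝ} {x : ℝ} (hU : HasDerivAt U (U' x) x)
    (hU' : HasDerivAt U' (U'' x) x) (hc : U x ≠ c) (hy : HasDerivAt y (y' x) x)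
    (hy' : HasDerivAt y' (rayleighCoeff U U'' k c x * y x) x) :
    HasDerivAt (fun t => (y' t * (U t - c) - U' t * y t) * y t / (U t - c))
      (k ^ 2 * y x ^ 2 + ((y' x * (U x - c) - U' x * y x) / (U x - c)) ^ 2) x := by
  have hUc := hU.sub_const c
  have := sub_ne_zero.2 hc
  refine ((((hy'.fun_mul hUc).fun_sub (hU'.fun_mul hy)).fun_mul hy).fun_div hUc this).congr_deriv ?_
  unfold rayleighCoeff
  field_simp
  ring

theorem IsSolutionOn.rayleigh_ne_zero_left {y y' : ℝ → ℝ} (hab : a < b)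
    (hU : ∀ x ∈ Icc a b, HasDerivAt U (U' x) x) (hU' : ∀ x ∈ Icc a b, HasDerivAt U' (U'' x) x)
    (hc : ∀ x ∈ Icc a b, U x ≠ c) (hy : IsSolutionOn (rayleighCoeff U U'' k c) y y' (Icc a b))
    (hyb : y b = 0) (hy'b : y' b ≠ 0) : y a ≠ 0 := by
  intro hya
  set N : ℝ → ℝ := fun t => y' t * (U t - c) - U' t * y t
  have hUc : ContinuousOn (fun t => U t - c) (Icc a b) :=
    (HasDerivAt.continuousOn hU).sub continuousOn_const
  have hN : ContinuousOn N (Icc a b) :=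
    (hy.continuousOn_deriv.mul hUc).sub ((HasDerivAt.continuousOn hU').mul hy.continuousOn)
  have hcont : ContinuousOn (fun x => k ^ 2 * y x ^ 2 + (N x / (U x - c)) ^ 2) (Icc a b) :=
    (continuousOn_const.mul (hy.continuousOn.pow 2)).add
      ((hN.div hUc fun x hx => sub_ne_zero.2 (hc x hx)).pow 2)
  have hpos : 0 < ∫ x in a..b, k ^ 2 * y x ^ 2 + (N x / (U x - c)) ^ 2 :=
    integral_pos hab hcont (fun x _ => by positivity) ⟨b, right_mem_Icc.2 hab.le, by
      simpa [N, hyb, sub_ne_zero.2 (hc b (right_mem_Icc.2 hab.le))]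
        using pow_two_pos_of_ne_zero hy'b⟩
  have hzero : ∫ x in a..b, k ^ 2 * y x ^ 2 + (N x / (U x - c)) ^ 2 = 0 := by
    rw [integral_eq_sub_of_hasDerivAt (f := fun t => N t * y t / (U t - c))
      (fun x hx => ?_) (hcont.intervalIntegrable_of_Icc hab.le)]
    · simp [hya, hyb]
    rw [uIcc_of_le hab.le] at hx
    exact hasDerivAt_rayleigh_flux (hU x hx) (hU' x hx) (hc x hx) (hy x hx).1 (hy x hx).2
  linarith

end Rayleigh

def IsRayleighFamily (U U'' : ℝ → ℝ) (k a b y₀ y₁ : ℝ) (y y' : ℝ → ℝ → ℝ) : Prop :=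
  ∀ c, (∀ x ∈ Icc a b, U x ≠ c) →
    IsSolutionOn (rayleighCoeff U U'' k c) (y c) (y' c) (Icc a b) ∧ y c b = y₀ ∧ y' c b = y₁

namespace IsRayleighFamily

variable {U U'' : ℝ → ℝ} {a b k y₀ y₁ c : ℝ} {y y' : ℝ → ℝ → ℝ}

theorem continuousOn_mul_div_sub (hfam : IsRayleighFamily U U'' k a b y₀ y₁ y y')
    (hU : ContinuousOn U (Icc a b)) (hU'' : ContinuousOn U'' (Icc a b))
    (hc : ∀ x ∈ Icc a b, U x ≠ c) :
    ContinuousOn (fun x => U'' x * y c x / (U x - c)) (Icc a b) :=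
  (hU''.mul (hfam c hc).1.continuousOn).div (hU.sub continuousOn_const)
    fun x hx => sub_ne_zero.2 (hc x hx)

theorem exists_eventually_abs_div_le (hfam : IsRayleighFamily U U'' k a b y₀ y₁ y y')
    (hU : ContinuousOn U (Icc a b)) (hU'' : ContinuousOn U'' (Icc a b))
    (hc : ∀ x ∈ Icc a b, U x ≠ c) :
    ∃ D, ∀ᶠ c' in 𝓝 c, ∀ x ∈ Icc a b, |U'' x * y c x / (U x - c) / (U x - c')| ≤ D :=
  isCompact_Icc.exists_eventually_forall_abs_div_sub_le
    (hfam.continuousOn_mul_div_sub hU hU'' hc) hU hc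

theorem exists_eventually_abs_sub_le (hfam : IsRayleighFamily U U'' k a b y₀ y₁ y y')
    (hU : ContinuousOn U (Icc a b)) (hU'' : ContinuousOn U'' (Icc a b))
    (hc : ∀ x ∈ Icc a b, U x ≠ c) :
    ∃ A, ∀ᶠ c' in 𝓝 c, ∀ x ∈ Icc a b, |y c' x - y c x| ≤ A * |c' - c| := by
  obtain ⟨hyc, hyb, hy'b⟩ := hfam c hc
  obtain ⟨C, hC⟩ := isCompact_Icc.exists_eventually_forall_abs_div_sub_le hU'' hU hc
  obtain ⟨D, hD⟩ := hfam.exists_eventually_abs_div_le hU hU'' hc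
  set L := k ^ 2 + C + 1
  refine ⟨D / L * exp (L * (b - a)), ?_⟩
  filter_upwards [hC, hD, isCompact_Icc.eventually_forall_ne hU hc] with c' hC' hD' hc' x hx
  obtain ⟨hyc', hyb', hy'b'⟩ := hfam c' hc'
  have hL : 1 ≤ L := by nlinarith [(abs_nonneg _).trans (hC' x hx), sq_nonneg k]
  refine (hyc.abs_sub_le_of_eq_right (ε := |c' - c| * D) hL hyc' (fun t ht => ?_) (fun t ht => ?_)
    (hyb'.trans hyb.symm) (hy'b'.trans hy'b.symm) hx).trans_eq (by ring)
  · calc |rayleighCoeff U U'' k c' t| ≤ |k ^ 2| + |U'' t / (U t - c')| := abs_add_le _ _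
      _ ≤ L := by rw [abs_sq]; linarith [hC' t ht]
  · rw [rayleighCoeff_sub (hc t ht) (hc' t ht)]
    calc |(c' - c) * (U'' t / (U t - c) / (U t - c')) * y c t|
        = |c' - c| * |U'' t * y c t / (U t - c) / (U t - c')| := by rw [← abs_mul]; ring_nf
      _ ≤ |c' - c| * D := by gcongr; exact hD' t ht

theorem tendstoUniformlyOn (hfam : IsRayleighFamily U U'' k a b y₀ y₁ y y')
    (hU : ContinuousOn U (Icc a b)) (hU'' : ContinuousOn U'' (Icc a b))
    (hc : ∀ x ∈ Icc a b, U x ≠ c) : TendstoUniformlyOn y (y c) (𝓝 c) (Icc a b) := by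
  obtain ⟨A, hA⟩ := hfam.exists_eventually_abs_sub_le hU hU'' hc
  have hlim : Tendsto (fun c' => A * |c' - c|) (𝓝 c) (𝓝 0) := by
    simpa using ((continuous_sub_right c).abs.const_mul A).tendsto c
  rw [Metric.tendstoUniformlyOn_iff]
  intro ε hε
  filter_upwards [hA, hlim.eventually (gt_mem_nhds hε)] with c' h₁ h₂ x hx
  rw [Real.dist_eq, abs_sub_comm]
  exact (h₁ x hx).trans_lt h₂

theorem continuousAt_integral (hfam : IsRayleighFamily U U'' k a b y₀ y₁ y y') (hab : a ≤ b)
    (hU : ContinuousOn U (Icc a b)) (hU'' : ContinuousOn U'' (Icc a b))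
    (hc : ∀ x ∈ Icc a b, U x ≠ c) :
    ContinuousAt (fun c' => ∫ x in a..b, U'' x * y c x / (U x - c) / (U x - c') * y c' x) c := by
  obtain ⟨D, hD⟩ := hfam.exists_eventually_abs_div_le hU hU'' hc
  obtain ⟨B, hB⟩ := isCompact_Icc.exists_bound_of_continuousOn (hfam c hc).1.continuousOn
  have hunif := hfam.tendstoUniformlyOn hU hU'' hc
  have hIcc : ∀ {x}, x ∈ uIoc a b → x ∈ Icc a b := fun hx =>
    Ioc_subset_Icc_self (by rwa [uIoc_of_le hab] at hx)
  refine continuousAt_of_dominated_interval (bound := fun _ => D * (B + 1)) ?_ ?_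
    intervalIntegrable_const (ae_of_all _ fun x hx => ?_)
  · filter_upwards [isCompact_Icc.eventually_forall_ne hU hc] with c' hc'
    exact (((hfam.continuousOn_mul_div_sub hU hU'' hc).div (hU.sub continuousOn_const)
      fun x hx => sub_ne_zero.2 (hc' x hx)).mul (hfam c' hc').1.continuousOn).mono
      (fun x hx => hIcc hx) |>.aestronglyMeasurable measurableSet_uIoc
  · filter_upwards [hD, Metric.tendstoUniformlyOn_iff.1 hunif 1 one_pos] with c' hD' h1
    refine ae_of_all _ fun x hx => ?_
    have hy : |y c' x| ≤ B + 1 := by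
      have hdist := h1 x (hIcc hx)
      have hBx := hB x (hIcc hx)
      rw [Real.dist_eq] at hdist
      rw [Real.norm_eq_abs] at hBx
      linarith [abs_sub_abs_le_abs_sub (y c' x) (y c x), abs_sub_comm (y c x) (y c' x)]
    rw [Real.norm_eq_abs, abs_mul]
    exact mul_le_mul (hD' x (hIcc hx)) hy (abs_nonneg _) ((abs_nonneg _).trans (hD' x (hIcc hx)))
  · exact ((continuousAt_const.div (continuousAt_const.sub continuousAt_id)
      (sub_ne_zero.2 (hc x (hIcc hx)))).mul (hunif.tendsto_at (hIcc hx)))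

theorem slope_eq (hfam : IsRayleighFamily U U'' k a b y₀ y₁ y y') (hab : a ≤ b)
    (hU : ContinuousOn U (Icc a b)) (hU'' : ContinuousOn U'' (Icc a b)) {c' : ℝ}
    (hc : ∀ x ∈ Icc a b, U x ≠ c) (hc' : ∀ x ∈ Icc a b, U x ≠ c') (hne : c' ≠ c)
    (hya : y c a ≠ 0) (hya' : y c' a ≠ 0) :
    slope (fun c => y' c a / y c a) c c' =
      -(∫ x in a..b, U'' x * y c x / (U x - c) / (U x - c') * y c' x) / (y c a * y c' a) := by
  obtain ⟨hyc, hyb, hy'b⟩ := hfam c hc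
  obtain ⟨hyc', hyb', hy'b'⟩ := hfam c' hc'
  have hW := hyc.wronskian_sub_eq_integral hab hyc' (continuousOn_rayleighCoeff hU hU'' hc)
    (continuousOn_rayleighCoeff hU hU'' hc')
  have hint : ∫ x in a..b, (rayleighCoeff U U'' k c' x - rayleighCoeff U U'' k c x) *
      (y c x * y c' x) =
      (c' - c) * ∫ x in a..b, U'' x * y c x / (U x - c) / (U x - c') * y c' x := by
    rw [← intervalIntegral.integral_const_mul]
    refine integral_congr fun x hx => ?_
    rw [uIcc_of_le hab] at hx
    simp only [rayleighCoeff_sub (hc x hx) (hc' x hx)]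
    ring
  rw [hyb, hy'b, hyb', hy'b', hint] at hW
  generalize (∫ x in a..b, U'' x * y c x / (U x - c) / (U x - c') * y c' x) = J at hW ⊢
  have := sub_ne_zero.2 hne
  rw [slope_def_field]
  field_simp
  linear_combination -hW

theorem hasDerivAt (hfam : IsRayleighFamily U U'' k a b y₀ y₁ y y') (hab : a ≤ b)
    (hU : ContinuousOn U (Icc a b)) (hU'' : ContinuousOn U'' (Icc a b))
    (hc : ∀ x ∈ Icc a b, U x ≠ c) (hya : y c a ≠ 0) :
    HasDerivAt (fun c' => y' c' a / y c' a)
      (-((∫ x in a..b, U'' x / (U x - c) ^ 2 * y c x ^ 2) / y c a ^ 2)) c := by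
  have hya' := (hfam.tendstoUniformlyOn hU hU'' hc).tendsto_at (left_mem_Icc.2 hab)
  have hlim := (((hfam.continuousAt_integral hab hU hU'' hc).neg).div
    (tendsto_const_nhds.mul hya') (mul_ne_zero hya hya)).mono_left (nhdsWithin_le_nhds (s := {c}ᶜ))
  rw [hasDerivAt_iff_tendsto_slope]
  convert hlim.congr' ?_ using 2
  · simp only [Pi.div_apply, Pi.neg_apply, neg_div, sq (y c a)]
    congr 2
    exact integral_congr fun x _ => by simp only [div_div, ← sq]; ring
  · filter_upwards [self_mem_nhdsWithin, nhdsWithin_le_nhds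
      ((isCompact_Icc.eventually_forall_ne hU hc).and (hya'.eventually_ne hya))]
      with c' hne ⟨hc', hya''⟩
    exact (hfam.slope_eq hab hU hU'' hc hc' hne hya hya'').symm

end IsRayleighFamily

/-- Derivative in `c` of `Y⁺(c, k) = (y⁺)'(c,k,0)/y⁺(c,k,0)` for the upper fundamental
solution of the Rayleigh equation, for real `c` off the range of `U⁺`. -/
theorem deriv_c_Y_plus
    (hp : ℝ) (hhp : 0 < hp)
    (Up Up' Up'' : ℝ → ℝ)
    (hUp : ∀ x ∈ Icc (0:ℝ) hp, HasDerivAt Up (Up' x) x)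
    (hUp' : ∀ x ∈ Icc (0:ℝ) hp, HasDerivAt Up' (Up'' x) x)
    (hUpc : ContinuousOn Up'' (Icc (0:ℝ) hp))
    (k : ℝ)
    (y y' y'' : ℝ → ℝ → ℝ)
    (hsol : ∀ c : ℝ, (∀ x ∈ Icc (0:ℝ) hp, Up x ≠ c) →
      (∀ x ∈ Icc (0:ℝ) hp,
        HasDerivAt (y c) (y' c x) x ∧ HasDerivAt (y' c) (y'' c x) x ∧
        -y'' c x + (k ^ 2 + Up'' x / (Up x - c)) * y c x = 0) ∧
      y c hp = 0 ∧ y' c hp = 1) :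
    ∀ c : ℝ, (∀ x ∈ Icc (0:ℝ) hp, Up x ≠ c) →
      y c 0 ≠ 0 ∧
      HasDerivAt (fun c' => y' c' 0 / y c' 0)
        (-((∫ x in (0:ℝ)..hp, Up'' x / (Up x - c) ^ 2 * y c x ^ 2) / y c 0 ^ 2)) c ∧
      ((∀ x ∈ Icc (0:ℝ) hp, 0 < Up'' x) →
        -((∫ x in (0:ℝ)..hp, Up'' x / (Up x - c) ^ 2 * y c x ^ 2) / y c 0 ^ 2) < 0) := by
  intro c hc
  have hU : ContinuousOn Up (Icc 0 hp) := HasDerivAt.continuousOn hUp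
  have hfam : IsRayleighFamily Up Up'' k 0 hp 0 1 y y' := fun c hc =>
    ⟨fun x hx => ⟨((hsol c hc).1 x hx).1, ((hsol c hc).1 x hx).2.1.congr_deriv
      (by rw [rayleighCoeff]; linarith [((hsol c hc).1 x hx).2.2])⟩, (hsol c hc).2⟩
  obtain ⟨hyc, hyb, hy'b⟩ := hfam c hc
  have hya : y c 0 ≠ 0 :=
    hyc.rayleigh_ne_zero_left hhp hUp hUp' hc hyb (by rw [hy'b]; exact one_ne_zero)
  refine ⟨hya, hfam.hasDerivAt hhp.le hU hUpc hc hya, fun hpos => ?_⟩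
  have hcont : ContinuousOn (fun x => Up'' x / (Up x - c) ^ 2 * y c x ^ 2) (Icc 0 hp) :=
    (hUpc.div ((hU.sub continuousOn_const).pow 2)
      fun x hx => pow_ne_zero 2 (sub_ne_zero.2 (hc x hx))).mul (hyc.continuousOn.pow 2)
  refine neg_neg_of_pos (div_pos (integral_pos hhp hcont (fun x hx => ?_)
    ⟨0, left_mem_Icc.2 hhp.le, ?_⟩) (pow_two_pos_of_ne_zero hya))
  · have := hpos x (Ioc_subset_Icc_self hx)
    positivity
  · have := hpos 0 (left_mem_Icc.2 hhp.le)
    have := sub_ne_zero.2 (hc 0 (left_mem_Icc.2 hhp.le))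
    positivity
end

section
/- Let h₋ > 0, U⁻ ∈ C²([−h₋, 0]; ℝ), and c ∈ ℝ \ U⁻([−h₋, 0]). For K ≥ 0 let y⁻(c, √K, ·) be the unique solution on [−h₋, 0] of −y'' + (K + (U⁻)''/(U⁻ − c)) y = 0 with y(−h₋) = 0, y'(−h₋) = 1, and define G(K) := (y⁻)'(c, √K, 0)/y⁻(c, √K, 0). Then y⁻(c, √K, 0) ≠ 0 for all K ≥ 0, G is differentiable on [0, ∞), and G'(K) = y⁻(c, √K, 0)^{−2} ∫_{−h₋}^{0} y⁻(c, √K, x)² dx > 0 for every K ≥ 0. -/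
/-!
Write the equation as `y'' = (K + q) y` with `q = U''/(U - c)`. The Wronskian of the solutions
for `K` and `K'` gives `y_{K'}'(0) y_K(0) - y_{K'}(0) y_K'(0) = (K' - K) ∫ y_{K'} y_K`, so the
difference quotient of `G` at `K` is `∫ y_{K'} y_K / (y_{K'}(0) y_K(0))`. By Gronwall's inequality
`y_{K'} → y_K` uniformly as `K' → K`, and the quotient tends to `∫ y_K² / y_K(0)²`.
-/

open Set MeasureTheory intervalIntegral Filter Topology

def IsSchrodingerSolOn (p : ℝ → ℝ) (s : Set ℝ) (f f' : ℝ → ℝ) : Prop :=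
  ∀ x ∈ s, HasDerivAt f (f' x) x ∧ HasDerivAt f' (p x * f x) x

namespace IsSchrodingerSolOn

variable {p : ℝ → ℝ} {s : Set ℝ} {f f' : ℝ → ℝ}

theorem continuousOn (hf : IsSchrodingerSolOn p s f f') : ContinuousOn f s :=
  HasDerivAt.continuousOn fun x hx => (hf x hx).1

theorem wronskian_eq_integral {q g g' : ℝ → ℝ} {a b K K' : ℝ} (hab : a ≤ b)
    (hf : IsSchrodingerSolOn (fun x => K + q x) (Icc a b) f f')
    (hg : IsSchrodingerSolOn (fun x => K' + q x) (Icc a b) g g')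
    (hfa : f a = 0) (hga : g a = 0) :
    g' b * f b - g b * f' b = (K' - K) * ∫ x in a..b, g x * f x := by
  have hW : ∀ x ∈ uIcc a b,
      HasDerivAt (fun x => g' x * f x - g x * f' x) ((K' - K) * (g x * f x)) x := by
    rw [uIcc_of_le hab]
    intro x hx
    refine (((hg x hx).2.mul (hf x hx).1).sub ((hg x hx).1.mul (hf x hx).2)).congr_deriv ?_
    ring
  have hint : IntervalIntegrable (fun x => (K' - K) * (g x * f x)) volume a b :=
    (continuousOn_const.mul (hg.continuousOn.mul hf.continuousOn)).intervalIntegrable_of_Icc hab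
  rw [← intervalIntegral.integral_const_mul, integral_eq_sub_of_hasDerivAt hW hint, hfa, hga]
  ring

/-- With `ψ = f' u - f u'`, the function `ψ f / u` has derivative `K f² + ψ² / u² ≥ 0`, which is
positive at `a` since `ψ a = f' a u a`; so `ψ f / u` cannot vanish at both ends. -/
theorem apply_right_ne_zero {u u' u'' : ℝ → ℝ} {a b K : ℝ} (hab : a < b) (hK : 0 ≤ K)
    (hu : ∀ x ∈ Icc a b, HasDerivAt u (u' x) x) (hu' : ∀ x ∈ Icc a b, HasDerivAt u' (u'' x) x)
    (hu0 : ∀ x ∈ Icc a b, u x ≠ 0)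
    (hf : IsSchrodingerSolOn (fun x => K + u'' x / u x) (Icc a b) f f')
    (hfa : f a = 0) (hf'a : f' a ≠ 0) : f b ≠ 0 := by
  intro hfb
  set ψ : ℝ → ℝ := fun x => f' x * u x - f x * u' x
  set F' : ℝ → ℝ := fun x => K * f x ^ 2 + ψ x ^ 2 / u x ^ 2
  have hψ : ∀ x ∈ Icc a b, HasDerivAt ψ (K * f x * u x) x := by
    intro x hx
    refine (((hf x hx).2.mul (hu x hx)).sub ((hf x hx).1.mul (hu' x hx))).congr_deriv ?_
    field_simp [hu0 x hx]
    ring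
  have hF : ∀ x ∈ uIcc a b, HasDerivAt (fun x => ψ x * (f x / u x)) (F' x) x := by
    rw [uIcc_of_le hab.le]
    intro x hx
    refine ((hψ x hx).mul ((hf x hx).1.div (hu x hx) (hu0 x hx))).congr_deriv ?_
    simp only [F', ψ, Pi.div_apply]
    field_simp [hu0 x hx]
  have hF'c : ContinuousOn F' (Icc a b) := by
    have hψc : ContinuousOn ψ (Icc a b) := HasDerivAt.continuousOn hψ
    have huc : ContinuousOn u (Icc a b) := HasDerivAt.continuousOn hu
    exact (continuousOn_const.mul (hf.continuousOn.pow 2)).add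
      ((hψc.pow 2).div (huc.pow 2) fun x hx => pow_ne_zero 2 (hu0 x hx))
  have hF'a : 0 < F' a := by
    have hψa : ψ a = f' a * u a := by simp [ψ, hfa]
    have hua := hu0 a (left_mem_Icc.2 hab.le)
    simp only [F', hfa, hψa]
    positivity
  have hpos : 0 < ∫ x in a..b, F' x :=
    integral_pos hab hF'c (fun x _ => by positivity) ⟨a, left_mem_Icc.2 hab.le, hF'a⟩
  rw [integral_eq_sub_of_hasDerivAt hF (hF'c.intervalIntegrable_of_Icc hab.le)] at hpos
  simp [hfa, hfb] at hpos

/-- Gronwall's inequality for `(g - f, g' - f')`, measured in the sup norm of `ℝ × ℝ`; the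
source term is `(r - p) f`, since `g'' - f'' = r (g - f) + (r - p) f`, and `1 ≤ C` bounds the
first component `g' - f'`. -/
theorem abs_sub_le_gronwallBound {r g g' : ℝ → ℝ} {a b C ε : ℝ} (hC : 1 ≤ C)
    (hf : IsSchrodingerSolOn p (Icc a b) f f') (hg : IsSchrodingerSolOn r (Icc a b) g g')
    (ha : g a = f a) (ha' : g' a = f' a)
    (hr : ∀ x ∈ Icc a b, |r x| ≤ C) (hε : ∀ x ∈ Icc a b, |(r x - p x) * f x| ≤ ε) :
    ∀ x ∈ Icc a b, |g x - f x| ≤ gronwallBound 0 C ε (x - a) := by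
  set E : ℝ → ℝ × ℝ := fun x => (g x - f x, g' x - f' x)
  have hE : ∀ x ∈ Icc a b,
      HasDerivAt E (g' x - f' x, r x * (g x - f x) + (r x - p x) * f x) x := by
    intro x hx
    refine (((hg x hx).1.sub (hf x hx).1).prodMk ((hg x hx).2.sub (hf x hx).2)).congr_deriv ?_
    ext <;> ring
  have hbound : ∀ x ∈ Ico a b,
      ‖(g' x - f' x, r x * (g x - f x) + (r x - p x) * f x)‖ ≤ C * ‖E x‖ + ε := by
    intro x hx
    have hx' := Ico_subset_Icc_self hx
    have h₁ : |g x - f x| ≤ ‖E x‖ := norm_fst_le (E x)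
    have h₂ : |g' x - f' x| ≤ ‖E x‖ := norm_snd_le (E x)
    have hε₀ : 0 ≤ ε := (abs_nonneg _).trans (hε x hx')
    refine max_le ?_ ?_
    · rw [Real.norm_eq_abs]
      nlinarith [norm_nonneg (E x)]
    · calc ‖r x * (g x - f x) + (r x - p x) * f x‖
          ≤ |r x| * |g x - f x| + |(r x - p x) * f x| := by
            rw [Real.norm_eq_abs, ← abs_mul]; exact abs_add_le _ _
        _ ≤ C * ‖E x‖ + ε := by
            gcongr
            · exact hr x hx'
            · exact hε x hx'
  have hGronwall := norm_le_gronwallBound_of_norm_deriv_right_le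
    (HasDerivAt.continuousOn hE) (fun x hx => (hE x (Ico_subset_Icc_self hx)).hasDerivWithinAt)
    (by simp [E, ha, ha'] : ‖E a‖ ≤ 0) hbound
  exact fun x hx => (norm_fst_le (E x)).trans (hGronwall x hx)

end IsSchrodingerSolOn

theorem TendstoUniformlyOn.mul_of_abs_le {ι α : Type*} {F : ι → α → ℝ} {f h : α → ℝ}
    {l : Filter ι} {s : Set α} {M : ℝ} (hF : TendstoUniformlyOn F f l s)
    (hh : ∀ x ∈ s, |h x| ≤ M) :
    TendstoUniformlyOn (fun i x => F i x * h x) (fun x => f x * h x) l s := by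
  rw [Metric.tendstoUniformlyOn_iff] at hF ⊢
  intro ε hε
  have hM : 0 < |M| + 1 := by positivity
  filter_upwards [hF (ε / (|M| + 1)) (by positivity)] with i hi x hx
  rw [Real.dist_eq, ← sub_mul, abs_mul, ← Real.dist_eq]
  calc dist (f x) (F i x) * |h x| ≤ dist (f x) (F i x) * |M| :=
        mul_le_mul_of_nonneg_left ((hh x hx).trans (le_abs_self M)) dist_nonneg
    _ < ε / (|M| + 1) * (|M| + 1) := by
        nlinarith [hi x hx, dist_nonneg (x := f x) (y := F i x), abs_nonneg M]
    _ = ε := div_mul_cancel₀ ε hM.ne'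

section Family

variable {q : ℝ → ℝ} {y y' : ℝ → ℝ → ℝ} {S : Set ℝ} {a b K : ℝ}

theorem tendstoUniformlyOn_of_isSchrodingerSolOn (hq : ContinuousOn q (Icc a b))
    (hy : ∀ K ∈ S, IsSchrodingerSolOn (fun x => K + q x) (Icc a b) (y K) (y' K))
    (hya : ∀ K ∈ S, y K a = 0) (hy'a : ∀ K ∈ S, y' K a = 1) (hK : K ∈ S) :
    TendstoUniformlyOn y (y K) (𝓝[S] K) (Icc a b) := by
  obtain ⟨C, hC⟩ := isCompact_Icc.exists_bound_of_continuousOn hq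
  obtain ⟨M, hM⟩ := isCompact_Icc.exists_bound_of_continuousOn (hy K hK).continuousOn
  set C₀ := |K| + |C| + 2
  have hbound : ∀ K' ∈ S, |K' - K| ≤ 1 → ∀ x ∈ Icc a b,
      |y K' x - y K x| ≤ gronwallBound 0 C₀ (|K' - K| * |M|) (b - a) := by
    intro K' hK' hK'K x hx
    have hpot : ∀ z ∈ Icc a b, |K' + q z| ≤ C₀ := by
      intro z hz
      have hqz : |q z| ≤ |C| := (hC z hz).trans (le_abs_self C)
      have hK'abs : |K'| ≤ |K| + 1 := by
        linarith [abs_sub_abs_le_abs_sub K' K]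
      linarith [abs_add_le K' (q z)]
    have hsource : ∀ z ∈ Icc a b, |(K' + q z - (K + q z)) * y K z| ≤ |K' - K| * |M| := by
      intro z hz
      rw [add_sub_add_right_eq_sub, abs_mul, ← Real.norm_eq_abs (y K z)]
      exact mul_le_mul_of_nonneg_left ((hM z hz).trans (le_abs_self M)) (abs_nonneg _)
    have hC₀ : 1 ≤ C₀ := by linarith [abs_nonneg K, abs_nonneg C]
    refine ((hy K hK).abs_sub_le_gronwallBound hC₀ (hy K' hK')
      ((hya K' hK').trans (hya K hK).symm) ((hy'a K' hK').trans (hy'a K hK).symm)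
      hpot hsource x hx).trans ?_
    exact gronwallBound_mono le_rfl (by positivity) (by positivity) (by linarith [hx.2])
  have hlim :
      Tendsto (fun K' => gronwallBound 0 C₀ (|K' - K| * |M|) (b - a)) (𝓝[S] K) (𝓝 0) := by
    have hsource : Tendsto (fun K' => |K' - K| * |M|) (𝓝 K) (𝓝 0) :=
      ((continuous_id.sub continuous_const).abs.mul continuous_const).tendsto' K 0 (by simp)
    exact ((gronwallBound_continuous_ε 0 C₀ (b - a)).tendsto' 0 0
      (gronwallBound_ε0_δ0 C₀ (b - a))).comp (hsource.mono_left nhdsWithin_le_nhds)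
  rw [Metric.tendstoUniformlyOn_iff]
  intro ε hε
  filter_upwards [self_mem_nhdsWithin, hlim (Iio_mem_nhds hε),
    nhdsWithin_le_nhds (Metric.closedBall_mem_nhds K one_pos)] with K' hK' hK'ε hK'K x hx
  rw [Real.dist_eq, abs_sub_comm]
  exact (hbound K' hK' hK'K x hx).trans_lt hK'ε

theorem hasDerivWithinAt_div_of_isSchrodingerSolOn (hab : a ≤ b) (hq : ContinuousOn q (Icc a b))
    (hy : ∀ K ∈ S, IsSchrodingerSolOn (fun x => K + q x) (Icc a b) (y K) (y' K))
    (hya : ∀ K ∈ S, y K a = 0) (hy'a : ∀ K ∈ S, y' K a = 1) (hyb : ∀ K ∈ S, y K b ≠ 0)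
    (hK : K ∈ S) :
    HasDerivWithinAt (fun K => y' K b / y K b) ((∫ x in a..b, y K x ^ 2) / y K b ^ 2) S K := by
  have hunif := tendstoUniformlyOn_of_isSchrodingerSolOn hq hy hya hy'a hK
  have hyb_lim : Tendsto (fun K' => y K' b) (𝓝[S] K) (𝓝 (y K b)) :=
    hunif.tendsto_at (right_mem_Icc.2 hab)
  have hint_lim : Tendsto (fun K' => ∫ x in a..b, y K' x * y K x) (𝓝[S] K)
      (𝓝 (∫ x in a..b, y K x ^ 2)) := by
    obtain ⟨M, hM⟩ := isCompact_Icc.exists_bound_of_continuousOn (hy K hK).continuousOn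
    rw [← uIcc_of_le hab] at hunif hM
    simp_rw [sq]
    refine (hunif.mul_of_abs_le hM).tendsto_intervalIntegral_of_continuousOn ?_
    filter_upwards [self_mem_nhdsWithin] with K' hK'
    rw [uIcc_of_le hab]
    exact (hy K' hK').continuousOn.mul (hy K hK).continuousOn
  rw [hasDerivWithinAt_iff_tendsto_slope, sq]
  refine ((hint_lim.div (hyb_lim.mul_const (y K b)) (mul_ne_zero (hyb K hK) (hyb K hK))).mono_left
    (nhdsWithin_mono K sdiff_subset)).congr' ?_
  filter_upwards [self_mem_nhdsWithin] with K' ⟨hK'S, hK'K⟩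
  have hW := (hy K hK).wronskian_eq_integral hab (hy K' hK'S) (hya K hK) (hya K' hK'S)
  rw [slope_def_field, div_sub_div _ _ (hyb K' hK'S) (hyb K hK), hW, mul_div_assoc,
    mul_div_cancel_left₀ _ (sub_ne_zero.2 hK'K)]
  rfl

end Family

/-- Derivative in `K = k²` of `Y⁻(c, √K)` for the lower fundamental solution:
it is positive for every `K ≥ 0`. -/
theorem deriv_K_Y_minus
    (hm : ℝ) (hhm : 0 < hm)
    (Um Um' Um'' : ℝ → ℝ)
    (hUm : ∀ x ∈ Icc (-hm) (0:ℝ), HasDerivAt Um (Um' x) x)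
    (hUm' : ∀ x ∈ Icc (-hm) (0:ℝ), HasDerivAt Um' (Um'' x) x)
    (hUmc : ContinuousOn Um'' (Icc (-hm) (0:ℝ)))
    (c : ℝ) (hc : ∀ x ∈ Icc (-hm) (0:ℝ), Um x ≠ c)
    (y y' y'' : ℝ → ℝ → ℝ)
    (hsol : ∀ K ∈ Ici (0:ℝ),
      (∀ x ∈ Icc (-hm) (0:ℝ),
        HasDerivAt (y K) (y' K x) x ∧ HasDerivAt (y' K) (y'' K x) x ∧
        -y'' K x + (K + Um'' x / (Um x - c)) * y K x = 0) ∧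
      y K (-hm) = 0 ∧ y' K (-hm) = 1) :
    ∀ K ∈ Ici (0:ℝ),
      y K 0 ≠ 0 ∧
      HasDerivWithinAt (fun K' => y' K' 0 / y K' 0)
        ((∫ x in (-hm)..0, y K x ^ 2) / y K 0 ^ 2) (Ici 0) K ∧
      0 < (∫ x in (-hm)..0, y K x ^ 2) / y K 0 ^ 2 := by
  have hab : -hm < 0 := neg_lt_zero.2 hhm
  have hy : ∀ K ∈ Ici (0:ℝ), IsSchrodingerSolOn (fun x => K + Um'' x / (Um x - c))
      (Icc (-hm) 0) (y K) (y' K) := by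
    intro K hK x hx
    obtain ⟨hyx, hy'x, hode⟩ := (hsol K hK).1 x hx
    exact ⟨hyx, hy'x.congr_deriv (by linarith)⟩
  have hUc : ∀ x ∈ Icc (-hm) (0:ℝ), Um x - c ≠ 0 := fun x hx => sub_ne_zero.2 (hc x hx)
  have hy0 : ∀ K ∈ Ici (0:ℝ), y K 0 ≠ 0 := fun K hK =>
    (hy K hK).apply_right_ne_zero hab hK (fun x hx => (hUm x hx).sub_const c) hUm' hUc
      (hsol K hK).2.1 ((hsol K hK).2.2 ▸ one_ne_zero)
  have hq : ContinuousOn (fun x => Um'' x / (Um x - c)) (Icc (-hm) 0) :=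
    hUmc.div ((HasDerivAt.continuousOn hUm).sub continuousOn_const) hUc
  intro K hK
  refine ⟨hy0 K hK, hasDerivWithinAt_div_of_isSchrodingerSolOn hab.le hq hy
    (fun K hK => (hsol K hK).2.1) (fun K hK => (hsol K hK).2.2) hy0 hK, ?_⟩
  have hy0K := hy0 K hK
  have hint : 0 < ∫ x in (-hm)..0, y K x ^ 2 :=
    integral_pos hab ((hy K hK).continuousOn.pow 2) (fun x _ => sq_nonneg _)
      ⟨0, right_mem_Icc.2 hab.le, by positivity⟩
  positivity
end

section
/- Let h₊ > 0, U⁺ ∈ C²([0, h₊]; ℝ), and c ∈ ℝ \ U⁺([0, h₊]). For K ≥ 0 let y⁺(c, √K, ·) be the unique solution on [0, h₊] of −y'' + (K + (U⁺)''/(U⁺ − c)) y = 0 with y(h₊) = 0, y'(h₊) = 1, and define G(K) := (y⁺)'(c, √K, 0)/y⁺(c, √K, 0). Then y⁺(c, √K, 0) ≠ 0 for all K ≥ 0, G is differentiable on [0, ∞), and G'(K) = − y⁺(c, √K, 0)^{−2} ∫_{0}^{h₊} y⁺(c, √K, x)² dx < 0 for every K ≥ 0. -/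
/-!
With `q = U''/(U - c)` the Rayleigh equation reads `y'' = (K + q) y`.
For `K ≥ 0`, `φ = U - c` and `u = φ y' - φ' y` one has `u' = K φ y`, so
`(u y / φ)' = K y² + (u / φ)² ≥ 0`, with strict inequality at `h₊` where `u / φ = 1`.
Hence `u y / φ`, which vanishes at `h₊`, is nonzero at `0`, so `y(0) ≠ 0`.
The Wronskian of the solutions for `K` and `K'` gives
`G(K') - G(K) = -(K' - K) ∫ y_K y_K' / (y_K(0) y_K'(0))`, and Grönwall's inequality makes
`y_K' → y_K` uniformly on `[0, h₊]` as `K' → K`, so the difference quotient tends to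
`-∫ y_K² / y_K(0)²`.
-/

open Set Filter Topology intervalIntegral

theorem abs_le_gronwallBound_of_secondOrder_of_eq_zero_right {a b L ε : ℝ} {z z' p f : ℝ → ℝ}
    (hz : ∀ x ∈ Icc a b, HasDerivAt z (z' x) x ∧ HasDerivAt z' (p x * z x + f x) x)
    (hpL : ∀ x ∈ Icc a b, |p x| ≤ L) (hfε : ∀ x ∈ Icc a b, |f x| ≤ ε) (hL : 1 ≤ L)
    (hb : z b = 0) (hb' : z' b = 0) :
    ∀ x ∈ Icc a b, |z x| ≤ gronwallBound 0 L ε (b - a) := by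
  set g : ℝ → ℝ × ℝ := fun t => (z (-t), z' (-t))
  set g' : ℝ → ℝ × ℝ := fun t => (-z' (-t), -(p (-t) * z (-t) + f (-t)))
  have hneg : ∀ t ∈ Icc (-b) (-a), -t ∈ Icc a b :=
    fun t ht => ⟨by linarith [ht.2], by linarith [ht.1]⟩
  have hg : ∀ t ∈ Icc (-b) (-a), HasDerivAt g (g' t) t := by
    intro t ht
    obtain ⟨h₁, h₂⟩ := hz (-t) (hneg t ht)
    exact ((h₁.comp t (hasDerivAt_neg t)).prodMk (h₂.comp t (hasDerivAt_neg t))).congr_deriv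
      (by simp [g'])
  have hbound : ∀ t ∈ Ico (-b) (-a), ‖g' t‖ ≤ L * ‖g t‖ + ε := by
    intro t ht
    have hx := hneg t (Ico_subset_Icc_self ht)
    have hzg : |z (-t)| ≤ ‖g t‖ := le_max_left _ _
    have hzg' : |z' (-t)| ≤ ‖g t‖ := le_max_right _ _
    have hε : 0 ≤ ε := (abs_nonneg _).trans (hfε _ hx)
    refine max_le ?_ ?_
    · rw [norm_neg, Real.norm_eq_abs]
      nlinarith [norm_nonneg (g t)]
    · calc ‖-(p (-t) * z (-t) + f (-t))‖ ≤ |p (-t)| * |z (-t)| + |f (-t)| := by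
            rw [norm_neg, Real.norm_eq_abs, ← abs_mul]; exact abs_add_le _ _
        _ ≤ L * ‖g t‖ + ε :=
            add_le_add (mul_le_mul (hpL _ hx) hzg (abs_nonneg _) (by linarith)) (hfε _ hx)
  have hgron := norm_le_gronwallBound_of_norm_deriv_right_le (δ := 0)
    (fun t ht => (hg t ht).continuousAt.continuousWithinAt)
    (fun t ht => (hg t (Ico_subset_Icc_self ht)).hasDerivWithinAt)
    (by simp [g, hb, hb']) hbound
  intro x hx
  have hε : 0 ≤ ε := (abs_nonneg _).trans (hfε _ hx)
  calc |z x| ≤ ‖g (-x)‖ := by simp [g]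
    _ ≤ gronwallBound 0 L ε (-x - -b) := hgron (-x) ⟨by linarith [hx.2], by linarith [hx.1]⟩
    _ ≤ gronwallBound 0 L ε (b - a) :=
      gronwallBound_mono le_rfl hε (by linarith) (by linarith [hx.1])

theorem tendstoUniformlyOn_of_abs_sub_le_mul {F : ℝ → ℝ → ℝ} {f : ℝ → ℝ} {s : Set ℝ}
    {l : Filter ℝ} {K C : ℝ} (hl : l ≤ 𝓝 K)
    (h : ∀ᶠ K' in l, ∀ x ∈ s, |F K' x - f x| ≤ C * |K' - K|) :
    TendstoUniformlyOn F f l s := by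
  rw [Metric.tendstoUniformlyOn_iff]
  intro ε hε
  have hlim : Tendsto (fun K' => C * |K' - K|) (𝓝 K) (𝓝 0) := by
    simpa using ((continuous_sub_right K).abs.const_mul C).tendsto K
  filter_upwards [h, hl (hlim.eventually (gt_mem_nhds hε))] with K' hK' hlt x hx
  rw [dist_comm, Real.dist_eq]
  exact (hK' x hx).trans_lt hlt

def IsSchrodingerSolutionOn (q : ℝ → ℝ) (K : ℝ) (s : Set ℝ) (y y' : ℝ → ℝ) : Prop :=
  ∀ x ∈ s, HasDerivAt y (y' x) x ∧ HasDerivAt y' ((K + q x) * y x) x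

namespace IsSchrodingerSolutionOn

variable {q : ℝ → ℝ} {K : ℝ} {a b : ℝ} {y y' : ℝ → ℝ}

lemma continuousOn {s : Set ℝ} (h : IsSchrodingerSolutionOn q K s y y') : ContinuousOn y s :=
  fun x hx => (h x hx).1.continuousAt.continuousWithinAt

lemma continuousOn_deriv {s : Set ℝ} (h : IsSchrodingerSolutionOn q K s y y') :
    ContinuousOn y' s :=
  fun x hx => (h x hx).2.continuousAt.continuousWithinAt

theorem wronskian_eq_integral {K₂ : ℝ} {y₂ y₂' : ℝ → ℝ} (hab : a ≤ b)
    (h₁ : IsSchrodingerSolutionOn q K (Icc a b) y y')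
    (h₂ : IsSchrodingerSolutionOn q K₂ (Icc a b) y₂ y₂') (hb₁ : y b = 0) (hb₂ : y₂ b = 0) :
    y' a * y₂ a - y a * y₂' a = (K₂ - K) * ∫ x in a..b, y x * y₂ x := by
  have hW : ∀ x ∈ uIcc a b,
      HasDerivAt (fun x => y' x * y₂ x - y x * y₂' x) ((K - K₂) * (y x * y₂ x)) x := by
    intro x hx
    rw [uIcc_of_le hab] at hx
    obtain ⟨hd₁, hd₁'⟩ := h₁ x hx
    obtain ⟨hd₂, hd₂'⟩ := h₂ x hx
    exact ((hd₁'.mul hd₂).sub (hd₁.mul hd₂')).congr_deriv (by ring)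
  have hint := integral_eq_sub_of_hasDerivAt hW
    (((continuousOn_const.mul (h₁.continuousOn.mul h₂.continuousOn)).mono
      (uIcc_of_le hab).subset).intervalIntegrable)
  rw [integral_const_mul, hb₁, hb₂] at hint
  linear_combination hint

theorem apply_left_ne_zero {φ φ' φ'' : ℝ → ℝ} (hab : a < b)
    (hφ : ∀ x ∈ Icc a b, HasDerivAt φ (φ' x) x) (hφ' : ∀ x ∈ Icc a b, HasDerivAt φ' (φ'' x) x)
    (hφ0 : ∀ x ∈ Icc a b, φ x ≠ 0) (hK : 0 ≤ K)
    (h : IsSchrodingerSolutionOn (fun x => φ'' x / φ x) K (Icc a b) y y')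
    (hb : y b = 0) (hb' : y' b ≠ 0) : y a ≠ 0 := by
  intro ha
  set u : ℝ → ℝ := fun x => y' x * φ x - y x * φ' x
  have hu : ∀ x ∈ Icc a b, HasDerivAt u (K * y x * φ x) x := fun x hx =>
    (((h x hx).2.mul (hφ x hx)).sub ((h x hx).1.mul (hφ' x hx))).congr_deriv
      (by field_simp [hφ0 x hx]; ring)
  have hF : ∀ x ∈ uIcc a b,
      HasDerivAt (fun x => u x * y x / φ x) (K * y x ^ 2 + (u x / φ x) ^ 2) x := by
    intro x hx
    rw [uIcc_of_le hab.le] at hx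
    exact (((hu x hx).mul (h x hx).1).div (hφ x hx) (hφ0 x hx)).congr_deriv
      (by field_simp [hφ0 x hx]; simp only [Pi.mul_apply, u]; ring)
  have hcont : ContinuousOn (fun x => K * y x ^ 2 + (u x / φ x) ^ 2) (Icc a b) := by
    have hφc : ContinuousOn φ (Icc a b) := fun x hx => (hφ x hx).continuousAt.continuousWithinAt
    have hφc' : ContinuousOn φ' (Icc a b) :=
      fun x hx => (hφ' x hx).continuousAt.continuousWithinAt
    exact (continuousOn_const.mul (h.continuousOn.pow 2)).add
      ((((h.continuousOn_deriv.mul hφc).sub (h.continuousOn.mul hφc')).div hφc hφ0).pow 2)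
  have hzero : ∫ x in a..b, (K * y x ^ 2 + (u x / φ x) ^ 2) = 0 := by
    rw [integral_eq_sub_of_hasDerivAt hF
      ((hcont.mono (uIcc_of_le hab.le).subset).intervalIntegrable)]
    simp [ha, hb]
  have hpos : 0 < ∫ x in a..b, (K * y x ^ 2 + (u x / φ x) ^ 2) := by
    refine integral_pos hab hcont (fun x _ => by positivity) ⟨b, right_mem_Icc.2 hab.le, ?_⟩
    have hub : u b / φ b = y' b := by simp [u, hb, hφ0 b (right_mem_Icc.2 hab.le)]
    rw [hb, hub]
    positivity
  exact hpos.ne' hzero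

lemma integral_sq_pos (hab : a < b) (h : IsSchrodingerSolutionOn q K (Icc a b) y y')
    (hb' : y' b ≠ 0) : 0 < ∫ x in a..b, y x ^ 2 := by
  refine integral_pos hab (h.continuousOn.pow 2) (fun x _ => sq_nonneg _) ?_
  by_contra! hy
  have hy0 : EqOn y 0 (Icc a b) := fun x hx => pow_eq_zero_iff two_ne_zero |>.1
    (le_antisymm (hy x hx) (sq_nonneg _))
  have hmem : b ∈ Icc a b := right_mem_Icc.2 hab.le
  have hzero : HasDerivWithinAt y 0 (Icc a b) b :=
    (hasDerivWithinAt_const b _ 0).congr hy0 (hy0 hmem)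
  exact hb' ((uniqueDiffOn_Icc hab b hmem).eq_deriv _ (h b hmem).1.hasDerivWithinAt hzero)

theorem exists_abs_sub_le_mul (hab : a ≤ b) (hq : ContinuousOn q (Icc a b))
    (h : IsSchrodingerSolutionOn q K (Icc a b) y y') :
    ∃ C, ∀ K₂ y₂ y₂', |K₂ - K| ≤ 1 → IsSchrodingerSolutionOn q K₂ (Icc a b) y₂ y₂' →
      y₂ b = y b → y₂' b = y' b → ∀ x ∈ Icc a b, |y₂ x - y x| ≤ C * |K₂ - K| := by
  obtain ⟨Q, hQ⟩ := isCompact_Icc.exists_bound_of_continuousOn hq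
  obtain ⟨M, hM⟩ := isCompact_Icc.exists_bound_of_continuousOn h.continuousOn
  have hQ0 : 0 ≤ Q := (norm_nonneg _).trans (hQ a (left_mem_Icc.2 hab))
  set L := |K| + 1 + Q
  refine ⟨M / L * (Real.exp (L * (b - a)) - 1), fun K₂ y₂ y₂' hK₂ h₂ hb hb' x hx => ?_⟩
  have hz : ∀ x ∈ Icc a b, HasDerivAt (fun x => y₂ x - y x) (y₂' x - y' x) x ∧
      HasDerivAt (fun x => y₂' x - y' x) ((K₂ + q x) * (y₂ x - y x) + (K₂ - K) * y x) x :=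
    fun x hx => ⟨(h₂ x hx).1.sub (h x hx).1, ((h₂ x hx).2.sub (h x hx).2).congr_deriv (by ring)⟩
  have hp : ∀ x ∈ Icc a b, |K₂ + q x| ≤ L := fun x hx =>
    calc |K₂ + q x| ≤ |K₂| + |q x| := abs_add_le _ _
      _ ≤ |K| + 1 + Q := by
        gcongr
        · linarith [abs_sub_abs_le_abs_sub K₂ K]
        · exact hQ x hx
  have hf : ∀ x ∈ Icc a b, |(K₂ - K) * y x| ≤ |K₂ - K| * M := fun x hx => by
    rw [abs_mul]; exact mul_le_mul_of_nonneg_left (hM x hx) (abs_nonneg _)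
  have hgron := abs_le_gronwallBound_of_secondOrder_of_eq_zero_right hz hp hf
    (by linarith [abs_nonneg K]) (by simp [hb]) (by simp [hb']) x hx
  rw [gronwallBound_of_K_ne_0 (by positivity)] at hgron
  exact hgron.trans_eq (by ring)

theorem hasDerivWithinAt_div_apply_left {S : Set ℝ} {y y' : ℝ → ℝ → ℝ} (hab : a ≤ b)
    (hq : ContinuousOn q (Icc a b))
    (hsol : ∀ K ∈ S, IsSchrodingerSolutionOn q K (Icc a b) (y K) (y' K) ∧ y K b = 0 ∧ y' K b = 1)
    (hne : ∀ K ∈ S, y K a ≠ 0) (hK : K ∈ S) :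
    HasDerivWithinAt (fun K' => y' K' a / y K' a)
      (-((∫ x in a..b, y K x ^ 2) / y K a ^ 2)) S K := by
  obtain ⟨h, hb, hb'⟩ := hsol K hK
  obtain ⟨C, hC⟩ := h.exists_abs_sub_le_mul hab hq
  obtain ⟨M, hM⟩ := isCompact_Icc.exists_bound_of_continuousOn h.continuousOn
  set l := 𝓝[S \ {K}] K
  have hl : l ≤ 𝓝 K := nhdsWithin_le_nhds
  have hnear : ∀ᶠ K' in l, K' ∈ S ∧ K' ≠ K ∧ |K' - K| ≤ 1 := by
    filter_upwards [self_mem_nhdsWithin, hl (Metric.closedBall_mem_nhds K one_pos)]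
      with K' hK' hball
    exact ⟨hK'.1, hK'.2, hball⟩
  have hclose : ∀ᶠ K' in l, ∀ x ∈ Icc a b, |y K' x - y K x| ≤ C * |K' - K| := by
    filter_upwards [hnear] with K' hK'
    obtain ⟨h', hb₂, hb₂'⟩ := hsol K' hK'.1
    exact hC K' _ _ hK'.2.2 h' (hb₂.trans hb.symm) (hb₂'.trans hb'.symm)
  have hya : Tendsto (fun K' => y K' a) l (𝓝 (y K a)) :=
    (tendstoUniformlyOn_of_abs_sub_le_mul hl hclose).tendsto_at (left_mem_Icc.2 hab)
  have hint : Tendsto (fun K' => ∫ x in a..b, y K x * y K' x) l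
      (𝓝 (∫ x in a..b, y K x ^ 2)) := by
    have hunif : TendstoUniformlyOn (fun K' x => y K x * y K' x) (fun x => y K x ^ 2) l
        (uIcc a b) := by
      refine tendstoUniformlyOn_of_abs_sub_le_mul (C := M * C) hl ?_
      filter_upwards [hclose] with K' hK' x hx
      rw [uIcc_of_le hab] at hx
      rw [sq, ← mul_sub, abs_mul, mul_assoc]
      exact mul_le_mul (hM x hx) (hK' x hx) (abs_nonneg _) ((abs_nonneg _).trans (hM x hx))
    refine hunif.tendsto_intervalIntegral_of_continuousOn ?_
    filter_upwards [hnear] with K' hK'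
    rw [uIcc_of_le hab]
    exact h.continuousOn.mul (hsol K' hK'.1).1.continuousOn
  rw [hasDerivWithinAt_iff_tendsto_slope]
  have hlim := (hint.div (tendsto_const_nhds.mul hya) (mul_ne_zero (hne K hK) (hne K hK))).neg
  rw [← sq] at hlim
  refine hlim.congr' ?_
  filter_upwards [hnear] with K' hK'
  obtain ⟨h', hb₂, -⟩ := hsol K' hK'.1
  have hW := h.wronskian_eq_integral hab h' hb hb₂
  rw [slope_def_field, Pi.div_apply]
  field_simp [hne K hK, hne K' hK'.1, sub_ne_zero.2 hK'.2.1]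
  linear_combination hW

end IsSchrodingerSolutionOn

/-- Derivative in `K = k²` of `Y⁺(c, √K)` for the upper fundamental solution:
it is negative for every `K ≥ 0`. -/
theorem deriv_K_Y_plus
    (hp : ℝ) (hhp : 0 < hp)
    (Up Up' Up'' : ℝ → ℝ)
    (hUp : ∀ x ∈ Icc (0:ℝ) hp, HasDerivAt Up (Up' x) x)
    (hUp' : ∀ x ∈ Icc (0:ℝ) hp, HasDerivAt Up' (Up'' x) x)
    (hUpc : ContinuousOn Up'' (Icc (0:ℝ) hp))
    (c : ℝ) (hc : ∀ x ∈ Icc (0:ℝ) hp, Up x ≠ c)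
    (y y' y'' : ℝ → ℝ → ℝ)
    (hsol : ∀ K ∈ Ici (0:ℝ),
      (∀ x ∈ Icc (0:ℝ) hp,
        HasDerivAt (y K) (y' K x) x ∧ HasDerivAt (y' K) (y'' K x) x ∧
        -y'' K x + (K + Up'' x / (Up x - c)) * y K x = 0) ∧
      y K hp = 0 ∧ y' K hp = 1) :
    ∀ K ∈ Ici (0:ℝ),
      y K 0 ≠ 0 ∧
      HasDerivWithinAt (fun K' => y' K' 0 / y K' 0)
        (-((∫ x in (0:ℝ)..hp, y K x ^ 2) / y K 0 ^ 2)) (Ici 0) K ∧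
      -((∫ x in (0:ℝ)..hp, y K x ^ 2) / y K 0 ^ 2) < 0 := by
  have hφ : ∀ x ∈ Icc 0 hp, HasDerivAt (fun x => Up x - c) (Up' x) x :=
    fun x hx => (hUp x hx).sub_const c
  have hφ0 : ∀ x ∈ Icc 0 hp, Up x - c ≠ 0 := fun x hx => sub_ne_zero.2 (hc x hx)
  have hq : ContinuousOn (fun x => Up'' x / (Up x - c)) (Icc 0 hp) :=
    hUpc.div (fun x hx => (hφ x hx).continuousAt.continuousWithinAt) hφ0
  have hsol' : ∀ K ∈ Ici (0:ℝ), IsSchrodingerSolutionOn (fun x => Up'' x / (Up x - c)) K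
      (Icc 0 hp) (y K) (y' K) ∧ y K hp = 0 ∧ y' K hp = 1 := by
    intro K hK
    obtain ⟨h, hb, hb'⟩ := hsol K hK
    refine ⟨fun x hx => ⟨(h x hx).1, (h x hx).2.1.congr_deriv ?_⟩, hb, hb'⟩
    linarith [(h x hx).2.2]
  have hb' : ∀ K ∈ Ici (0:ℝ), y' K hp ≠ 0 := fun K hK => by simp [(hsol' K hK).2.2]
  have hne : ∀ K ∈ Ici (0:ℝ), y K 0 ≠ 0 := fun K hK =>
    (hsol' K hK).1.apply_left_ne_zero hhp hφ hUp' hφ0 hK (hsol' K hK).2.1 (hb' K hK)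
  intro K hK
  refine ⟨hne K hK,
    IsSchrodingerSolutionOn.hasDerivWithinAt_div_apply_left hhp.le hq hsol' hne hK, ?_⟩
  exact neg_neg_of_pos (div_pos ((hsol' K hK).1.integral_sq_pos hhp (hb' K hK))
    (sq_pos_iff.2 (hne K hK)))
end

section
/- Let h₋ > 0, U⁻ ∈ C²([−h₋, 0]; ℝ), c ∈ ℝ \ U⁻([−h₋, 0]), and K₀ ≥ 0. For K ≥ 0 let y(K, ·) := y⁻(c, √K, ·) be the unique solution on [−h₋, 0] of −y'' + (K + (U⁻)''/(U⁻ − c)) y = 0 with y(−h₋) = 0, y'(−h₋) = 1, and for each x ∈ [−h₋, 0] let z(x) denote the derivative of K ↦ y(K, x) at K = K₀ (which exists). Then y(K₀, x) > 0 for all x ∈ (−h₋, 0], the function x ↦ z(x)/y(K₀, x) is differentiable on (−h₋, 0] with derivative d/dx ( z(x)/y(K₀, x) ) = y(K₀, x)^{−2} ∫_{−h₋}^{x} y(K₀, s)² ds > 0; in particular x ↦ z(x)/y(K₀, x) is strictly increasing on (−h₋, 0]. -/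
/-!
With `ψ = U⁻ - c`, which solves the `K = 0` equation and does not vanish, Picone's identity
`(y y' - y² ψ'/ψ)' = K y² + (y' - y ψ'/ψ)²` makes `y y' - y² ψ'/ψ` and then `(y/ψ)²`
nondecreasing; since `y` starts with slope `1` at `-h₋`, it cannot vanish afterwards.

For two values `K, K₀` the Wronskian identity `y_K' y_{K₀} - y_K y_{K₀}' = (K - K₀) ∫ y_K y_{K₀}`
integrates to `[y_K / y_{K₀}]ₜˣ = (K - K₀) ∫ₜˣ (∫_{-h₋}^s y_K y_{K₀}) / y_{K₀}(s)² ds`.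
Dividing by `K - K₀` and letting `K → K₀` (dominated convergence, with a Grönwall bound on `y_K`
uniform in `K`) gives `[z / y_{K₀}]ₜˣ = ∫ₜˣ (∫_{-h₋}^s y_{K₀}²) / y_{K₀}(s)² ds`, from which the
derivative and the strict monotonicity are read off.
-/

open Set MeasureTheory intervalIntegral Filter Topology

theorem hasDerivWithinAt_integral_Icc {f : ℝ → ℝ} {a b c x : ℝ}
    (hf : ContinuousOn f (Icc a b)) (hc : c ∈ Icc a b) (hx : x ∈ Icc a b) :
    HasDerivWithinAt (fun u => ∫ s in c..u, f s) (f x) (Icc a b) x := by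
  have : Fact (x ∈ Icc a b) := ⟨hx⟩
  exact integral_hasDerivWithinAt_right
    (hf.mono (uIcc_subset_Icc hc hx)).intervalIntegrable
    (hf.stronglyMeasurableAtFilter_nhdsWithin measurableSet_Icc x) (hf x hx)

theorem continuousOn_primitive_Icc {f : ℝ → ℝ} {a b : ℝ} (hf : ContinuousOn f (Icc a b)) :
    ContinuousOn (fun x => ∫ s in a..x, f s) (Icc a b) := fun _ hx =>
  (hasDerivWithinAt_integral_Icc hf ⟨le_rfl, hx.1.trans hx.2⟩ hx).continuousWithinAt

theorem abs_integral_le_mul_of_abs_le {f : ℝ → ℝ} {a b C x : ℝ}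
    (hf : ∀ u ∈ Icc a b, |f u| ≤ C) (hx : x ∈ Icc a b) :
    |∫ u in a..x, f u| ≤ C * (b - a) := by
  have hC : 0 ≤ C := (abs_nonneg _).trans (hf x hx)
  calc |∫ u in a..x, f u| ≤ C * |x - a| := by
        rw [← Real.norm_eq_abs]
        exact intervalIntegral.norm_integral_le_of_norm_le_const fun u hu =>
          hf u (Ioc_subset_Icc_self.trans (Icc_subset_Icc_right hx.2) (uIoc_of_le hx.1 ▸ hu))
    _ ≤ C * (b - a) := by
        rw [abs_of_nonneg (sub_nonneg.mpr hx.1)]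
        exact mul_le_mul_of_nonneg_left (by linarith [hx.2]) hC

theorem tendsto_intervalIntegral_of_abs_le {ι : Type*} {l : Filter ι} [l.IsCountablyGenerated]
    {F : ι → ℝ → ℝ} {f : ℝ → ℝ} {a b C : ℝ}
    (hF : ∀ᶠ i in l, ContinuousOn (F i) (uIcc a b))
    (hC : ∀ᶠ i in l, ∀ x ∈ uIcc a b, |F i x| ≤ C)
    (hlim : ∀ x ∈ uIcc a b, Tendsto (fun i => F i x) l (𝓝 (f x))) :
    Tendsto (fun i => ∫ x in a..b, F i x) l (𝓝 (∫ x in a..b, f x)) :=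
  tendsto_integral_filter_of_dominated_convergence (fun _ => C)
    (hF.mono fun _ h => (h.mono uIoc_subset_uIcc).aestronglyMeasurable measurableSet_uIoc)
    (hC.mono fun _ h => ae_of_all _ fun x hx => h x (uIoc_subset_uIcc hx))
    intervalIntegrable_const
    (ae_of_all _ fun x hx => hlim x (uIoc_subset_uIcc hx))

theorem tendsto_integral_primitive_mul_div_sq {ι : Type*} {l : Filter ι}
    [l.IsCountablyGenerated] {F : ι → ℝ → ℝ} {f g : ℝ → ℝ} {a b t x B : ℝ}
    (hF : ∀ᶠ i in l, ContinuousOn (F i) (Icc a b))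
    (hB : ∀ᶠ i in l, ∀ u ∈ Icc a b, |F i u| ≤ B)
    (hlim : ∀ u ∈ Icc a b, Tendsto (fun i => F i u) l (𝓝 (f u)))
    (hg : ContinuousOn g (Icc a b)) (ht : t ∈ Icc a b) (hx : x ∈ Icc a b)
    (hg0 : ∀ s ∈ uIcc t x, g s ≠ 0) :
    Tendsto (fun i => ∫ s in t..x, (∫ u in a..s, F i u * g u) / g s ^ 2) l
      (𝓝 (∫ s in t..x, (∫ u in a..s, f u * g u) / g s ^ 2)) := by
  have hsub : uIcc t x ⊆ Icc a b := uIcc_subset_Icc ht hx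
  obtain ⟨G, hG⟩ := isCompact_Icc.exists_bound_of_continuousOn hg
  obtain ⟨D, hD⟩ := isCompact_uIcc.exists_bound_of_continuousOn
    (((hg.mono hsub).pow 2).inv₀ fun s hs => pow_ne_zero 2 (hg0 s hs))
  have hFg : ∀ᶠ i in l, ∀ u ∈ Icc a b, |F i u * g u| ≤ B * G :=
    hB.mono fun i h u hu => by
      rw [abs_mul]
      exact mul_le_mul (h u hu) (hG u hu) (abs_nonneg _) ((abs_nonneg _).trans (h u hu))
  have hinner : ∀ s ∈ Icc a b, Tendsto (fun i => ∫ u in a..s, F i u * g u) l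
      (𝓝 (∫ u in a..s, f u * g u)) := fun s hs =>
    have hsub' : uIcc a s ⊆ Icc a b := uIcc_subset_Icc ⟨le_rfl, hs.1.trans hs.2⟩ hs
    tendsto_intervalIntegral_of_abs_le (hF.mono fun i h => (h.mul hg).mono hsub')
      (hFg.mono fun i h u hu => h u (hsub' hu)) fun u hu => (hlim u (hsub' hu)).mul_const _
  refine tendsto_intervalIntegral_of_abs_le (C := B * G * (b - a) * D)
    (hF.mono fun i h => ((continuousOn_primitive_Icc (h.mul hg)).mono hsub).div
      ((hg.mono hsub).pow 2) fun s hs => pow_ne_zero 2 (hg0 s hs))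
    (hFg.mono fun i h s hs => ?_) fun s hs => (hinner s (hsub hs)).div_const _
  rw [div_eq_mul_inv, abs_mul]
  exact mul_le_mul (abs_integral_le_mul_of_abs_le h (hsub hs)) (hD s hs) (abs_nonneg _)
    ((abs_nonneg _).trans (abs_integral_le_mul_of_abs_le h (hsub hs)))

theorem hasDerivWithinAt_of_sub_eq_integral {φ F : ℝ → ℝ} {a b : ℝ}
    (hF : ContinuousOn F (Ioc a b))
    (hφ : ∀ t ∈ Ioc a b, ∀ x ∈ Ioc a b, φ x - φ t = ∫ s in t..x, F s)
    {x : ℝ} (hx : x ∈ Ioc a b) : HasDerivWithinAt φ (F x) (Icc a b) x := by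
  obtain ⟨t, hat, htx⟩ := exists_between hx.1
  have hsub : Icc t b ⊆ Ioc a b := fun u hu => ⟨hat.trans_le hu.1, hu.2⟩
  have hint : HasDerivWithinAt (fun u => φ t + ∫ s in t..u, F s) (F x) (Icc t b) x :=
    (hasDerivWithinAt_integral_Icc (hF.mono hsub) ⟨le_rfl, htx.le.trans hx.2⟩
      ⟨htx.le, hx.2⟩).const_add _
  have heq : ∀ u ∈ Icc t b, φ u = φ t + ∫ s in t..u, F s := fun u hu => by
    linarith [hφ t (hsub ⟨le_rfl, htx.le.trans hx.2⟩) u (hsub hu)]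
  exact (hint.congr_of_mem heq ⟨htx.le, hx.2⟩).mono_of_mem_nhdsWithin
    (mem_nhdsWithin.mpr ⟨Ioi t, isOpen_Ioi, htx, fun u hu => ⟨hu.1.le, hu.2.2⟩⟩)

theorem strictMonoOn_of_sub_eq_integral {φ F : ℝ → ℝ} {a b : ℝ}
    (hF : ContinuousOn F (Ioc a b)) (hF0 : ∀ x ∈ Ioc a b, 0 < F x)
    (hφ : ∀ t ∈ Ioc a b, ∀ x ∈ Ioc a b, φ x - φ t = ∫ s in t..x, F s) :
    StrictMonoOn φ (Ioc a b) := fun t ht x hx htx => by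
  have hsub : Icc t x ⊆ Ioc a b := fun u hu => ⟨ht.1.trans_le hu.1, hu.2.trans hx.2⟩
  have := intervalIntegral_pos_of_pos_on
    ((hF.mono hsub).intervalIntegrable_of_Icc htx.le)
    (fun u hu => hF0 u (hsub (Ioo_subset_Icc_self hu))) htx
  linarith [hφ t ht x hx]

def SolvesOn (w : ℝ → ℝ) (a b : ℝ) (f f' : ℝ → ℝ) : Prop :=
  ∀ x ∈ Icc a b, HasDerivAt f (f' x) x ∧ HasDerivAt f' (w x * f x) x

namespace SolvesOn

variable {w : ℝ → ℝ} {a b : ℝ} {f f' : ℝ → ℝ}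

theorem hasDerivAt (h : SolvesOn w a b f f') {x : ℝ} (hx : x ∈ Icc a b) :
    HasDerivAt f (f' x) x :=
  (h x hx).1

theorem hasDerivAt_deriv (h : SolvesOn w a b f f') {x : ℝ} (hx : x ∈ Icc a b) :
    HasDerivAt f' (w x * f x) x :=
  (h x hx).2

theorem continuousOn (h : SolvesOn w a b f f') : ContinuousOn f (Icc a b) :=
  fun _ hx => (h.hasDerivAt hx).continuousAt.continuousWithinAt

theorem abs_le_mul_exp (h : SolvesOn w a b f f') {C : ℝ} (hC : 1 ≤ C)
    (hw : ∀ x ∈ Icc a b, |w x| ≤ C) {x : ℝ} (hx : x ∈ Icc a b) :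
    |f x| ≤ ‖(f a, f' a)‖ * Real.exp (C * (x - a)) := by
  have hbound : ∀ u ∈ Ico a b, ‖(f' u, w u * f u)‖ ≤ C * ‖(f u, f' u)‖ + 0 := by
    intro u hu
    simp only [Prod.norm_def, Real.norm_eq_abs, add_zero, abs_mul]
    have hfu : |f u| ≤ max |f u| |f' u| := le_max_left _ _
    have hf'u : |f' u| ≤ max |f u| |f' u| := le_max_right _ _
    have hwu := hw u (Ico_subset_Icc_self hu)
    apply max_le <;> nlinarith [abs_nonneg (w u), abs_nonneg (f u)]
  have := norm_le_gronwallBound_of_norm_deriv_right_le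
    (f := fun u => (f u, f' u)) (f' := fun u => (f' u, w u * f u))
    (fun u hu => ((h.hasDerivAt hu).continuousAt.prodMk
      (h.hasDerivAt_deriv hu).continuousAt).continuousWithinAt)
    (fun u hu => ((h.hasDerivAt (Ico_subset_Icc_self hu)).prodMk
      (h.hasDerivAt_deriv (Ico_subset_Icc_self hu))).hasDerivWithinAt)
    le_rfl hbound x hx
  rw [gronwallBound_ε0] at this
  exact (le_max_left _ _).trans this

variable {K : ℝ} {ψ ψ' : ℝ → ℝ}

theorem hasDerivAt_picone (hf : SolvesOn (fun x => K + w x) a b f f')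
    (hψ : SolvesOn w a b ψ ψ') {x : ℝ} (hx : x ∈ Icc a b) (hψx : ψ x ≠ 0) :
    HasDerivAt (fun x => f x * f' x - f x ^ 2 * ψ' x / ψ x)
      (K * f x ^ 2 + (f' x - f x * ψ' x / ψ x) ^ 2) x := by
  have hf₁ := hf.hasDerivAt hx
  have hψ₁ := hψ.hasDerivAt hx
  refine ((hf₁.mul (hf.hasDerivAt_deriv hx)).sub
    (((hf₁.pow 2).mul (hψ.hasDerivAt_deriv hx)).div hψ₁ hψx)).congr_deriv ?_
  simp only [Pi.pow_apply, Pi.mul_apply]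
  field_simp
  ring

theorem monotoneOn_sq_div (hK : 0 ≤ K) (hf : SolvesOn (fun x => K + w x) a b f f')
    (hfa : f a = 0) (hψ : SolvesOn w a b ψ ψ') (hψ0 : ∀ x ∈ Icc a b, ψ x ≠ 0) :
    MonotoneOn (fun x => (f x / ψ x) ^ 2) (Icc a b) := by
  have hΦ : MonotoneOn (fun x => f x * f' x - f x ^ 2 * ψ' x / ψ x) (Icc a b) :=
    monotoneOn_of_hasDerivWithinAt_nonneg (convex_Icc a b)
      (fun x hx => (hasDerivAt_picone hf hψ hx (hψ0 x hx)).continuousAt.continuousWithinAt)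
      (fun x hx => (hasDerivAt_picone hf hψ (interior_subset hx)
        (hψ0 x (interior_subset hx))).hasDerivWithinAt)
      (fun x _ => by positivity)
  have hΦ0 : ∀ x ∈ Icc a b, 0 ≤ f x * f' x - f x ^ 2 * ψ' x / ψ x := fun x hx => by
    simpa [hfa] using hΦ ⟨le_rfl, hx.1.trans hx.2⟩ hx hx.1
  have hderiv : ∀ x ∈ Icc a b, HasDerivAt (fun x => (f x / ψ x) ^ 2)
      (2 * (f x * f' x - f x ^ 2 * ψ' x / ψ x) / ψ x ^ 2) x := fun x hx => by
    refine (((hf.hasDerivAt hx).div (hψ.hasDerivAt hx) (hψ0 x hx)).pow 2).congr_deriv ?_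
    have := hψ0 x hx
    norm_num only [Pi.div_apply]
    field_simp
  exact monotoneOn_of_hasDerivWithinAt_nonneg (convex_Icc a b)
    (fun x hx => (hderiv x hx).continuousAt.continuousWithinAt)
    (fun x hx => (hderiv x (interior_subset hx)).hasDerivWithinAt)
    (fun x hx => div_nonneg (mul_nonneg zero_le_two (hΦ0 x (interior_subset hx)))
      (sq_nonneg _))

theorem pos_of_eq_zero_of_deriv_pos (hK : 0 ≤ K) (hf : SolvesOn (fun x => K + w x) a b f f')
    (hfa : f a = 0) (hf'a : 0 < f' a) (hψ : SolvesOn w a b ψ ψ')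
    (hψ0 : ∀ x ∈ Icc a b, ψ x ≠ 0) {x : ℝ} (hx : x ∈ Ioc a b) : 0 < f x := by
  have hpos_near : ∀ u ∈ Ioc a b, ∃ t ∈ Ioo a u, 0 < f t := fun u hu => by
    have hslope := (hasDerivAt_iff_tendsto_slope.mp
      (hf.hasDerivAt ⟨le_rfl, hu.1.le.trans hu.2⟩)).mono_left (nhdsGT_le_nhdsNE a)
    have hev : ∀ᶠ t in 𝓝[>] a, 0 < f t := by
      filter_upwards [hslope.eventually (eventually_gt_nhds hf'a), self_mem_nhdsWithin]
        with t ht hat using pos_of_slope_pos hat ht hfa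
    exact (hev.and (Ioo_mem_nhdsGT hu.1)).exists.imp fun t ht => ⟨ht.2, ht.1⟩
  have hne : ∀ u ∈ Ioc a b, f u ≠ 0 := fun u hu hfu => by
    obtain ⟨t, ht, hft⟩ := hpos_near u hu
    have hmono := monotoneOn_sq_div hK hf hfa hψ hψ0 ⟨ht.1.le, ht.2.le.trans hu.2⟩
      (Ioc_subset_Icc_self hu) ht.2.le
    have : 0 < (f t / ψ t) ^ 2 :=
      pow_two_pos_of_ne_zero (div_ne_zero hft.ne' (hψ0 t ⟨ht.1.le, ht.2.le.trans hu.2⟩))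
    simp only [hfu, zero_div] at hmono
    linarith
  obtain ⟨t, ht, hft⟩ := hpos_near x hx
  by_contra! hfx
  obtain ⟨u, hu, hfu⟩ := isPreconnected_Ioc.intermediate_value hx
    ⟨ht.1, ht.2.le.trans hx.2⟩ (hf.continuousOn.mono Ioc_subset_Icc_self) ⟨hfx, hft.le⟩
  exact hne u hu hfu

theorem wronskian_eq {L : ℝ} {g g' : ℝ → ℝ} (hf : SolvesOn (fun x => K + w x) a b f f')
    (hg : SolvesOn (fun x => L + w x) a b g g') {x : ℝ} (hx : x ∈ Icc a b) :
    f' x * g x - f x * g' x = f' a * g a - f a * g' a + (K - L) * ∫ s in a..x, f s * g s := by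
  have hsub : uIcc a x ⊆ Icc a b := uIcc_subset_Icc ⟨le_rfl, hx.1.trans hx.2⟩ hx
  have hFTC := integral_eq_sub_of_hasDerivAt
    (f := fun x => f' x * g x - f x * g' x) (f' := fun s => (K - L) * (f s * g s))
    (fun s hs => (((hf.hasDerivAt_deriv (hsub hs)).mul (hg.hasDerivAt (hsub hs))).sub
      ((hf.hasDerivAt (hsub hs)).mul (hg.hasDerivAt_deriv (hsub hs)))).congr_deriv (by ring))
    (((hf.continuousOn.mul hg.continuousOn).mono hsub).intervalIntegrable.const_mul _)
  rw [intervalIntegral.integral_const_mul] at hFTC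
  linarith

theorem div_sub_div_eq_integral {L : ℝ} {g g' : ℝ → ℝ}
    (hf : SolvesOn (fun x => K + w x) a b f f') (hfa : f a = 0)
    (hg : SolvesOn (fun x => L + w x) a b g g') (hga : g a = 0) {t x : ℝ}
    (ht : t ∈ Icc a b) (hx : x ∈ Icc a b) (hg0 : ∀ s ∈ uIcc t x, g s ≠ 0) :
    f x / g x - f t / g t = (K - L) * ∫ s in t..x, (∫ u in a..s, f u * g u) / g s ^ 2 := by
  have hsub : uIcc t x ⊆ Icc a b := uIcc_subset_Icc ht hx
  have hI := continuousOn_primitive_Icc (hf.continuousOn.mul hg.continuousOn)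
  rw [← intervalIntegral.integral_const_mul]
  refine (integral_eq_sub_of_hasDerivAt (f := fun s => f s / g s) (fun s hs => ?_) ?_).symm
  · refine ((hf.hasDerivAt (hsub hs)).div (hg.hasDerivAt (hsub hs)) (hg0 s hs)).congr_deriv ?_
    rw [wronskian_eq hf hg (hsub hs), hfa, hga]
    ring
  · exact (continuousOn_const.mul ((hI.mono hsub).div ((hg.continuousOn.mono hsub).pow 2)
      fun s hs => pow_ne_zero 2 (hg0 s hs))).intervalIntegrable

end SolvesOn

def IsFundamentalSolution (w : ℝ → ℝ) (a b : ℝ) (f f' : ℝ → ℝ) : Prop :=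
  SolvesOn w a b f f' ∧ f a = 0 ∧ f' a = 1

section Family

variable {w : ℝ → ℝ} {a b : ℝ} {y y' : ℝ → ℝ → ℝ}

theorem exists_abs_le_of_isFundamentalSolution (hw : ContinuousOn w (Icc a b))
    (hy : ∀ K ∈ Ici (0 : ℝ), IsFundamentalSolution (fun x => K + w x) a b (y K) (y' K))
    (L : ℝ) : ∃ B, ∀ K ∈ Icc 0 L, ∀ x ∈ Icc a b, |y K x| ≤ B := by
  obtain ⟨M, hM⟩ := isCompact_Icc.exists_bound_of_continuousOn hw
  set C := max 1 (L + M)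
  refine ⟨Real.exp (C * (b - a)), fun K hK x hx => ?_⟩
  obtain ⟨hsol, hya, hy'a⟩ := hy K hK.1
  have hw' : ∀ u ∈ Icc a b, |K + w u| ≤ C := fun u hu =>
    calc |K + w u| ≤ K + |w u| := (abs_add_le _ _).trans_eq (by rw [abs_of_nonneg hK.1])
      _ ≤ L + M := add_le_add hK.2 (hM u hu)
      _ ≤ C := le_max_right _ _
  have hbound := hsol.abs_le_mul_exp (le_max_left _ _) hw' hx
  rw [hya, hy'a, Prod.norm_mk, norm_zero, norm_one, max_eq_right zero_le_one, one_mul]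
    at hbound
  exact hbound.trans (Real.exp_le_exp.mpr (mul_le_mul_of_nonneg_left (by linarith [hx.2])
    (zero_le_one.trans (le_max_left _ _))))

theorem paramDeriv_div_sub_div_eq_integral (hw : ContinuousOn w (Icc a b))
    (hy : ∀ K ∈ Ici (0 : ℝ), IsFundamentalSolution (fun x => K + w x) a b (y K) (y' K))
    {K₀ : ℝ} (hK₀ : 0 ≤ K₀) {z : ℝ → ℝ}
    (hz : ∀ x ∈ Icc a b, HasDerivWithinAt (fun K => y K x) (z x) (Ici 0) K₀)
    {t x : ℝ} (ht : t ∈ Icc a b) (hx : x ∈ Icc a b) (hy0 : ∀ s ∈ uIcc t x, y K₀ s ≠ 0) :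
    z x / y K₀ x - z t / y K₀ t
      = ∫ s in t..x, (∫ u in a..s, y K₀ u * y K₀ u) / y K₀ s ^ 2 := by
  set l := 𝓝[Ici 0 \ {K₀}] K₀
  have : l.NeBot := (nhdsGT_neBot K₀).mono
    (nhdsWithin_mono _ fun K hK => ⟨hK₀.trans hK.out.le, hK.out.ne'⟩)
  have hratio : ∀ K ∈ Ici (0 : ℝ), y K x / y K₀ x - y K t / y K₀ t
      = (K - K₀) * ∫ s in t..x, (∫ u in a..s, y K u * y K₀ u) / y K₀ s ^ 2 := fun K hK =>
    (hy K hK).1.div_sub_div_eq_integral (hy K hK).2.1 (hy K₀ hK₀).1 (hy K₀ hK₀).2.1 ht hx hy0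
  have hslope : (slope (fun K => y K x / y K₀ x - y K t / y K₀ t) K₀) =ᶠ[l]
      fun K => ∫ s in t..x, (∫ u in a..s, y K u * y K₀ u) / y K₀ s ^ 2 := by
    filter_upwards [self_mem_nhdsWithin] with K hK
    rw [slope_def_field, hratio K hK.1, hratio K₀ hK₀, sub_self, zero_mul, sub_zero,
      mul_div_cancel_left₀ _ (sub_ne_zero.mpr hK.2)]
  obtain ⟨B, hB⟩ := exists_abs_le_of_isFundamentalSolution hw hy (K₀ + 1)
  have hnear : ∀ᶠ K in l, K ∈ Icc 0 (K₀ + 1) := by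
    filter_upwards [self_mem_nhdsWithin,
      nhdsWithin_le_nhds (eventually_lt_nhds (lt_add_one K₀))] with K hK hK'
    exact ⟨hK.1, hK'.le⟩
  refine tendsto_nhds_unique (((hasDerivWithinAt_iff_tendsto_slope.mp
    (((hz x hx).div_const _).sub ((hz t ht).div_const _)))).congr' hslope)
    (tendsto_integral_primitive_mul_div_sq (hnear.mono fun K hK => (hy K hK.1).1.continuousOn)
      (hnear.mono fun K hK => hB K hK) (fun u hu => ?_) (hy K₀ hK₀).1.continuousOn ht hx hy0)
  exact ((hz u hu).continuousWithinAt.tendsto).mono_left (nhdsWithin_mono _ sdiff_subset)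

end Family

theorem monotone_dK_y_over_y_general
    (hm : ℝ)
    (Um Um' Um'' : ℝ → ℝ)
    (hUm : ∀ x ∈ Icc (-hm) (0:ℝ), HasDerivAt Um (Um' x) x)
    (hUm' : ∀ x ∈ Icc (-hm) (0:ℝ), HasDerivAt Um' (Um'' x) x)
    (hUmc : ContinuousOn Um'' (Icc (-hm) (0:ℝ)))
    (c : ℝ) (hc : ∀ x ∈ Icc (-hm) (0:ℝ), Um x ≠ c)
    (K₀ : ℝ) (hK₀ : 0 ≤ K₀)
    (y y' y'' : ℝ → ℝ → ℝ)
    (hsol : ∀ K ∈ Ici (0:ℝ),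
      (∀ x ∈ Icc (-hm) (0:ℝ),
        HasDerivAt (y K) (y' K x) x ∧ HasDerivAt (y' K) (y'' K x) x ∧
        -y'' K x + (K + Um'' x / (Um x - c)) * y K x = 0) ∧
      y K (-hm) = 0 ∧ y' K (-hm) = 1)
    (z : ℝ → ℝ)
    (hz : ∀ x ∈ Icc (-hm) (0:ℝ),
      HasDerivWithinAt (fun K => y K x) (z x) (Ici 0) K₀) :
    (∀ x ∈ Ioc (-hm) (0:ℝ), 0 < y K₀ x) ∧
    (∀ x ∈ Ioc (-hm) (0:ℝ),
      HasDerivWithinAt (fun t => z t / y K₀ t)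
        ((∫ s in (-hm)..x, y K₀ s ^ 2) / y K₀ x ^ 2) (Icc (-hm) 0) x ∧
      0 < (∫ s in (-hm)..x, y K₀ s ^ 2) / y K₀ x ^ 2) ∧
    StrictMonoOn (fun t => z t / y K₀ t) (Ioc (-hm) 0) := by
  set q : ℝ → ℝ := fun x => Um'' x / (Um x - c)
  have hUc : ∀ x ∈ Icc (-hm) (0:ℝ), Um x - c ≠ 0 := fun x hx => sub_ne_zero.mpr (hc x hx)
  have hq : ContinuousOn q (Icc (-hm) 0) := hUmc.div
    (fun x hx => ((hUm x hx).continuousAt.sub continuousAt_const).continuousWithinAt) hUc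
  have hψ : SolvesOn q (-hm) 0 (fun x => Um x - c) Um' := fun x hx =>
    ⟨(hUm x hx).sub_const c, (hUm' x hx).congr_deriv (div_mul_cancel₀ _ (hUc x hx)).symm⟩
  have hy : ∀ K ∈ Ici (0:ℝ), IsFundamentalSolution (fun x => K + q x) (-hm) 0 (y K) (y' K) :=
    fun K hK => ⟨fun x hx =>
      have ⟨hy₁, hy₂, hode⟩ := (hsol K hK).1 x hx
      ⟨hy₁, hy₂.congr_deriv (by linarith)⟩, (hsol K hK).2⟩
  obtain ⟨hp, hpa, hp'a⟩ := hy K₀ hK₀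
  have hpos : ∀ x ∈ Ioc (-hm) (0:ℝ), 0 < y K₀ x := fun x hx =>
    hp.pos_of_eq_zero_of_deriv_pos hK₀ hpa (hp'a ▸ one_pos) hψ hUc hx
  set F : ℝ → ℝ := fun s => (∫ u in (-hm)..s, y K₀ u ^ 2) / y K₀ s ^ 2
  have hF : ContinuousOn F (Ioc (-hm) 0) :=
    ((continuousOn_primitive_Icc (hp.continuousOn.pow 2)).mono Ioc_subset_Icc_self).div
      ((hp.continuousOn.pow 2).mono Ioc_subset_Icc_self) fun x hx => pow_ne_zero 2 (hpos x hx).ne'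
  have hF0 : ∀ x ∈ Ioc (-hm) (0:ℝ), 0 < F x := fun x hx =>
    div_pos (intervalIntegral_pos_of_pos_on
      (((hp.continuousOn.pow 2).mono (Icc_subset_Icc_right hx.2)).intervalIntegrable_of_Icc
        hx.1.le)
      (fun u hu => pow_pos (hpos u ⟨hu.1, hu.2.le.trans hx.2⟩) 2) hx.1)
      (pow_pos (hpos x hx) 2)
  have hkey : ∀ t ∈ Ioc (-hm) (0:ℝ), ∀ x ∈ Ioc (-hm) (0:ℝ),
      z x / y K₀ x - z t / y K₀ t = ∫ s in t..x, F s := fun t ht x hx => by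
    simpa only [← sq] using paramDeriv_div_sub_div_eq_integral hq hy hK₀ hz
      (Ioc_subset_Icc_self ht) (Ioc_subset_Icc_self hx)
      fun s hs => (hpos s (ordConnected_Ioc.uIcc_subset ht hx hs)).ne'
  exact ⟨hpos, fun x hx => ⟨hasDerivWithinAt_of_sub_eq_integral hF hkey hx, hF0 x hx⟩,
    strictMonoOn_of_sub_eq_integral hF hF0 hkey⟩

/-- Monotonicity of `x ↦ (∂_K y⁻ / y⁻)(x)` on `(-h₋, 0]` for the lower
fundamental solution of the Rayleigh equation. -/
theorem monotone_dK_y_over_y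
    (hm : ℝ) (hhm : 0 < hm)
    (Um Um' Um'' : ℝ → ℝ)
    (hUm : ∀ x ∈ Icc (-hm) (0:ℝ), HasDerivAt Um (Um' x) x)
    (hUm' : ∀ x ∈ Icc (-hm) (0:ℝ), HasDerivAt Um' (Um'' x) x)
    (hUmc : ContinuousOn Um'' (Icc (-hm) (0:ℝ)))
    (c : ℝ) (hc : ∀ x ∈ Icc (-hm) (0:ℝ), Um x ≠ c)
    (K₀ : ℝ) (hK₀ : 0 ≤ K₀)
    (y y' y'' : ℝ → ℝ → ℝ)
    (hsol : ∀ K ∈ Ici (0:ℝ),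
      (∀ x ∈ Icc (-hm) (0:ℝ),
        HasDerivAt (y K) (y' K x) x ∧ HasDerivAt (y' K) (y'' K x) x ∧
        -y'' K x + (K + Um'' x / (Um x - c)) * y K x = 0) ∧
      y K (-hm) = 0 ∧ y' K (-hm) = 1)
    (z : ℝ → ℝ)
    (hz : ∀ x ∈ Icc (-hm) (0:ℝ),
      HasDerivWithinAt (fun K => y K x) (z x) (Ici 0) K₀) :
    (∀ x ∈ Ioc (-hm) (0:ℝ), 0 < y K₀ x) ∧
    (∀ x ∈ Ioc (-hm) (0:ℝ),
      HasDerivWithinAt (fun t => z t / y K₀ t)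
        ((∫ s in (-hm)..x, y K₀ s ^ 2) / y K₀ x ^ 2) (Icc (-hm) 0) x ∧
      0 < (∫ s in (-hm)..x, y K₀ s ^ 2) / y K₀ x ^ 2) ∧
    StrictMonoOn (fun t => z t / y K₀ t) (Ioc (-hm) 0) :=
  monotone_dK_y_over_y_general hm Um Um' Um'' hUm hUm' hUmc c hc K₀ hK₀ y y' y'' hsol z hz
end
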